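/- arXiv:0810.1643 — 5 statements merged into one kernel-verified Lean document; each statement's English description precedes it below -/
import Mathlib

section
/- For every continuum X there exist a metrizable continuum Y and a continuous surjection q : X → Y such that: Y is chainable if and only if X is chainable; Y has span zero if and only if X has span zero; Y has semispan zero if and only if X has semispan zero; Y has surjective span zero if and only if X has surjective span zero; and Y has surjective semispan zero if and only if X has surjective semispan zero. -/
/-- A continuum `X` is chainable if every finite open cover has a finite open
refinement that can be enumerated as `V_0, …, V_{n-1}` with
`V_i ∩ V_j ≠ ∅` iff `|i - j| ≤ 1`. -/
def Chainable (X : Type*) [TopologicalSpace X] : Prop :=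
  ∀ U : Finset (Set X), (∀ u ∈ U, IsOpen u) → ⋃₀ (U : Set (Set X)) = Set.univ →
    ∃ (n : ℕ) (V : Fin n → Set X),
      (∀ i, IsOpen (V i)) ∧ (⋃ i, V i) = Set.univ ∧
      (∀ i, ∃ u ∈ U, V i ⊆ u) ∧
      ∀ i j : Fin n, (V i ∩ V j).Nonempty ↔ |((i : ℕ) : ℤ) - ((j : ℕ) : ℤ)| ≤ 1

/-- A continuum has span zero if every subcontinuum `Z` of `X × X` with
`π₁[Z] = π₂[Z]` meets the diagonal. -/
def SpanZero (X : Type*) [TopologicalSpace X] : Prop :=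
  ∀ Z : Set (X × X), IsClosed Z → IsConnected Z →
    Prod.fst '' Z = Prod.snd '' Z → ∃ x : X, (x, x) ∈ Z

/-- A continuum has semispan zero if every subcontinuum `Z` of `X × X` with
`π₁[Z] ⊆ π₂[Z]` meets the diagonal. -/
def SemispanZero (X : Type*) [TopologicalSpace X] : Prop :=
  ∀ Z : Set (X × X), IsClosed Z → IsConnected Z →
    Prod.fst '' Z ⊆ Prod.snd '' Z → ∃ x : X, (x, x) ∈ Z

/-- A continuum has surjective span zero if every subcontinuum `Z` of `X × X` with
`π₁[Z] = π₂[Z] = X` meets the diagonal. -/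
def SurjectiveSpanZero (X : Type*) [TopologicalSpace X] : Prop :=
  ∀ Z : Set (X × X), IsClosed Z → IsConnected Z →
    Prod.fst '' Z = Set.univ → Prod.snd '' Z = Set.univ → ∃ x : X, (x, x) ∈ Z

/-- A continuum has surjective semispan zero if every subcontinuum `Z` of `X × X`
with `π₂[Z] = X` meets the diagonal. -/
def SurjectiveSemispanZero (X : Type*) [TopologicalSpace X] : Prop :=
  ∀ Z : Set (X × X), IsClosed Z → IsConnected Z →
    Prod.snd '' Z = Set.univ → ∃ x : X, (x, x) ∈ Z

/-!
`Y` is the image of `X` under the evaluation map `X → ℝ^ℕ` of a countable family `S` of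
continuous real functions, where `S` is closed under countably many requirements (a
Löwenheim–Skolem style closure).

From `Y` to `X`: `S` contains finitely many functions that see a failure of the property in `X`
(an open cover with no chain refinement, or a subcontinuum of `X × X` missing the diagonal), so
the failure is pushed down to `Y`.

From `X` to `Y`, spans: if `X` has zero span of some kind and a closed `E ⊆ X × X` misses the
diagonal, then there is a finite `H` such that no nonempty `W ⊆ E` whose image under the
`H`-evaluation is connected has the required projections; otherwise an ultrafilter limit of such
sets would be a subcontinuum of `E` with these projections. A subcontinuum of `Y × Y` missing the
diagonal pulls back into one of countably many such `E` described by functions of `S`, and the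
corresponding `H` may be taken in `S`.

From `X` to `Y`, chainability: a chain refinement can be shrunk so that its links are preimages
of open sets under finitely many functions. Doing this inside `S` for the countably many covers by
small balls of the `G`-evaluations (`G ⊆ S` finite) and using a Lebesgue number, chain
refinements push down to `Y`.
-/

open Set Filter Topology

namespace MetricReflection

section EvalMap

variable {X : Type*} [TopologicalSpace X]

def evalMap (G : Finset C(X, ℝ)) (x : X) : G → ℝ := fun g => g.1 x

def evalMap₂ (G : Finset C(X, ℝ)) : X × X → (G → ℝ) × (G → ℝ) :=
  Prod.map (evalMap G) (evalMap G)

@[fun_prop]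
lemma continuous_evalMap (G : Finset C(X, ℝ)) : Continuous (evalMap G) :=
  continuous_pi fun g => g.1.continuous

@[fun_prop]
lemma continuous_evalMap₂ (G : Finset C(X, ℝ)) : Continuous (evalMap₂ G) :=
  (continuous_evalMap G).prodMap (continuous_evalMap G)

lemma evalMap_eq_iff {G : Finset C(X, ℝ)} {x y : X} :
    evalMap G x = evalMap G y ↔ ∀ g ∈ G, g x = g y :=
  ⟨fun h g hg => congrFun h ⟨g, hg⟩, fun h => funext fun g => h g g.2⟩

lemma evalMap_fiber_mono {G G' : Finset C(X, ℝ)} (h : G ⊆ G') (x : X) :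
    evalMap G' ⁻¹' {evalMap G' x} ⊆ evalMap G ⁻¹' {evalMap G x} := fun y hy => by
  simp only [mem_preimage, mem_singleton_iff, evalMap_eq_iff] at hy ⊢
  exact fun g hg => hy g (h hg)

lemma evalMap₂_fiber_mono {G G' : Finset C(X, ℝ)} (h : G ⊆ G') (z : X × X) :
    evalMap₂ G' ⁻¹' {evalMap₂ G' z} ⊆ evalMap₂ G ⁻¹' {evalMap₂ G z} := fun w hw => by
  simp only [mem_preimage, mem_singleton_iff, evalMap₂, Prod.map, Prod.mk.injEq] at hw ⊢
  exact ⟨evalMap_fiber_mono h _ hw.1, evalMap_fiber_mono h _ hw.2⟩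

lemma exists_continuousMap_support_subset [NormalSpace X] [T1Space X] {V : Set X}
    (hV : IsOpen V) {x : X} (hx : x ∈ V) : ∃ g : C(X, ℝ), g x ≠ 0 ∧ ∀ y, g y ≠ 0 → y ∈ V := by
  obtain ⟨g, hg0, hg1, -⟩ := exists_continuous_zero_one_of_isClosed hV.isClosed_compl
    isClosed_singleton (disjoint_singleton_right.2 (not_not.2 hx))
  exact ⟨g, by simp [hg1 rfl], fun y hy => not_not.1 fun hyV => hy (hg0 hyV)⟩

lemma _root_.IsCompact.exists_finset_separating {K : Set (X × X)} (hK : IsCompact K)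
    {S : Set C(X, ℝ)} (hS : ∀ z ∈ K, ∃ g ∈ S, g z.1 ≠ g z.2) :
    ∃ G : Finset C(X, ℝ), ↑G ⊆ S ∧ ∀ z ∈ K, evalMap G z.1 ≠ evalMap G z.2 := by
  obtain ⟨t, htS, htf, hKt⟩ := hK.elim_finite_subcover_image (b := S)
    (c := fun g => {z : X × X | g z.1 ≠ g z.2}) (fun g _ => isOpen_ne_fun (by fun_prop)
      (by fun_prop)) (fun z hz => let ⟨g, hg, hgz⟩ := hS z hz; mem_iUnion₂.2 ⟨g, hg, hgz⟩)
  refine ⟨htf.toFinset, by simpa using htS, fun z hz hzG => ?_⟩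
  obtain ⟨g, hg, hgz⟩ := mem_iUnion₂.1 (hKt hz)
  exact hgz (evalMap_eq_iff.1 hzG g (htf.mem_toFinset.2 hg))

variable [CompactSpace X] [T2Space X]

lemma exists_finset_evalMap₂_fiber_subset {𝒪 : Set (Set (X × X))} (h𝒪 : ∀ O ∈ 𝒪, IsOpen O)
    (hcov : ⋃₀ 𝒪 = univ) :
    ∃ G : Finset C(X, ℝ), ∀ z, ∃ O ∈ 𝒪, evalMap₂ G ⁻¹' {evalMap₂ G z} ⊆ O := by
  classical
  have hbox : ∀ z : X × X, ∃ O ∈ 𝒪, ∃ g h : C(X, ℝ), g z.1 ≠ 0 ∧ h z.2 ≠ 0 ∧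
      ∀ w : X × X, g w.1 ≠ 0 → h w.2 ≠ 0 → w ∈ O := by
    intro z
    obtain ⟨O, hO, hz⟩ := mem_sUnion.1 (hcov ▸ mem_univ z)
    obtain ⟨A, B, hA, hB, hzA, hzB, hAB⟩ := isOpen_prod_iff.1 (h𝒪 O hO) z.1 z.2 hz
    obtain ⟨g, hgz, hg⟩ := exists_continuousMap_support_subset hA hzA
    obtain ⟨h, hhz, hh⟩ := exists_continuousMap_support_subset hB hzB
    exact ⟨O, hO, g, h, hgz, hhz, fun w hw hw' => hAB ⟨hg _ hw, hh _ hw'⟩⟩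
  choose O hO g h hgz hhz hgh using hbox
  obtain ⟨t, ht⟩ := isCompact_univ.elim_finite_subcover
    (fun z => {w : X × X | g z w.1 ≠ 0 ∧ h z w.2 ≠ 0})
    (fun z => (isOpen_ne_fun (by fun_prop) continuous_const).inter
      (isOpen_ne_fun (by fun_prop) continuous_const))
    (fun w _ => mem_iUnion.2 ⟨w, hgz w, hhz w⟩)
  refine ⟨t.image g ∪ t.image h, fun z => ?_⟩
  obtain ⟨z₀, hz₀, hgz₀, hhz₀⟩ := mem_iUnion₂.1 (ht (mem_univ z))
  refine ⟨O z₀, hO z₀, fun w hw => hgh z₀ w ?_ ?_⟩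
  · rwa [evalMap_eq_iff.1 (Prod.ext_iff.1 hw).1 (g z₀)
      (Finset.mem_union_left _ (Finset.mem_image_of_mem _ hz₀))]
  · rwa [evalMap_eq_iff.1 (Prod.ext_iff.1 hw).2 (h z₀)
      (Finset.mem_union_right _ (Finset.mem_image_of_mem _ hz₀))]

lemma exists_finset_evalMap_fiber_subset {𝒰 : Set (Set X)} (h𝒰 : ∀ u ∈ 𝒰, IsOpen u)
    (hcov : ⋃₀ 𝒰 = univ) :
    ∃ G : Finset C(X, ℝ), ∀ x, ∃ u ∈ 𝒰, evalMap G ⁻¹' {evalMap G x} ⊆ u := by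
  obtain ⟨G, hG⟩ := exists_finset_evalMap₂_fiber_subset (𝒪 := (· ×ˢ univ) '' 𝒰)
    (by rintro _ ⟨u, hu, rfl⟩; exact (h𝒰 u hu).prod isOpen_univ)
    (by rw [sUnion_image, ← iUnion₂_prod_const, ← sUnion_eq_biUnion, hcov, univ_prod_univ])
  refine ⟨G, fun x => ?_⟩
  obtain ⟨_, ⟨u, hu, rfl⟩, hxu⟩ := hG (x, x)
  exact ⟨u, hu, fun y hy => (hxu (show evalMap₂ G (y, x) = evalMap₂ G (x, x) from
    Prod.ext hy rfl)).1⟩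

lemma exists_finset_separating {Z : Set (X × X)} (hZ : IsClosed Z) (hZΔ : ∀ x, (x, x) ∉ Z) :
    ∃ G : Finset C(X, ℝ), ∀ z ∈ Z, evalMap G z.1 ≠ evalMap G z.2 := by
  obtain ⟨G, -, hG⟩ := hZ.isCompact.exists_finset_separating (S := univ) fun z hz => by
    have hne : z.1 ≠ z.2 := fun h => hZΔ z.1 (by rwa [← Prod.mk.eta (p := z), ← h] at hz)
    obtain ⟨g, hgz, hg⟩ := exists_continuousMap_support_subset isOpen_compl_singleton hne
    exact ⟨g, trivial, fun h => hg z.2 (h ▸ hgz) rfl⟩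
  exact ⟨G, hG⟩

end EvalMap

section LimitSet

lemma mem_bind_principal {ι α : Type*} {l : Filter ι} {A : ι → Set α} {s : Set α} :
    s ∈ l.bind (fun i => 𝓟 (A i)) ↔ ∀ᶠ i in l, A i ⊆ s :=
  Iff.rfl

variable {ι α β : Type*} [TopologicalSpace α] [TopologicalSpace β]

/-- The upper Kuratowski limit of the sets `A i` along the filter `l`. -/
def limitSet (l : Filter ι) (A : ι → Set α) : Set α :=
  {x | ClusterPt x (l.bind fun i => 𝓟 (A i))}

lemma isClosed_limitSet (l : Filter ι) (A : ι → Set α) : IsClosed (limitSet l A) :=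
  isClosed_setOfPred_clusterPt

lemma limitSet_nonempty [CompactSpace α] {l : Filter ι} [l.NeBot] {A : ι → Set α}
    (h : ∀ᶠ i in l, (A i).Nonempty) : (limitSet l A).Nonempty := by
  have : (l.bind fun i => 𝓟 (A i)).NeBot := by
    refine ⟨fun hbot => ?_⟩
    obtain ⟨i, hi, hi'⟩ := (h.and (mem_bind_principal.1 (hbot ▸ mem_bot))).exists
    exact not_nonempty_empty (hi.mono hi')
  exact exists_clusterPt_of_compactSpace _

lemma limitSet_subset {l : Filter ι} {A : ι → Set α} {s : Set α} (hs : IsClosed s)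
    (h : ∀ᶠ i in l, A i ⊆ s) : limitSet l A ⊆ s := fun _ hx =>
  hs.closure_subset (hx.mem_closure_of_mem s (mem_bind_principal.2 h))

lemma eventually_subset_of_limitSet_subset [CompactSpace α] {l : Filter ι} {A : ι → Set α}
    {U : Set α} (hU : IsOpen U) (h : limitSet l A ⊆ U) : ∀ᶠ i in l, A i ⊆ U := by
  refine mem_bind_principal.1 (not_not.1 fun hUl => ?_)
  have : ((l.bind fun i => 𝓟 (A i)) ⊓ 𝓟 Uᶜ).NeBot :=
    ⟨fun hbot => hUl (by simpa using inf_principal_eq_bot.1 hbot)⟩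
  obtain ⟨x, hx⟩ := exists_clusterPt_of_compactSpace ((l.bind fun i => 𝓟 (A i)) ⊓ 𝓟 Uᶜ)
  exact hU.isClosed_compl.closure_subset (hx.of_inf_right.mem_closure_of_mem _
    (mem_principal_self Uᶜ)) (h hx.of_inf_left)

lemma limitSet_mono {l : Filter ι} {A B : ι → Set α} (h : ∀ᶠ i in l, A i ⊆ B i) :
    limitSet l A ⊆ limitSet l B := fun _ hx =>
  hx.mono (bind_mono le_rfl (h.mono fun _ => principal_mono.2))

lemma limitSet_congr {l : Filter ι} {A B : ι → Set α} (h : ∀ᶠ i in l, A i = B i) :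
    limitSet l A = limitSet l B :=
  (limitSet_mono (h.mono fun _ => le_of_eq)).antisymm (limitSet_mono (h.mono fun _ => ge_of_eq))

lemma limitSet_eq_univ {l : Filter ι} [l.NeBot] {A : ι → Set α} (h : ∀ᶠ i in l, A i = univ) :
    limitSet l A = univ := by
  refine eq_univ_of_forall fun x => ClusterPt.of_nhds_le fun s hs => ?_
  obtain ⟨i, hi, hi'⟩ := (h.and (mem_bind_principal.1 hs)).exists
  exact mem_of_superset univ_mem (hi ▸ hi')

lemma image_limitSet [CompactSpace α] [T2Space β] {f : α → β} (hf : Continuous f)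
    (l : Filter ι) (A : ι → Set α) : f '' limitSet l A = limitSet l fun i => f '' A i := by
  have hmap : map f (l.bind fun i => 𝓟 (A i)) = l.bind fun i => 𝓟 (f '' A i) := by
    simp only [map_bind, Function.comp_def, map_principal]
  ext y
  simp only [limitSet, ← hmap, mem_image, mem_ofPred_eq]
  constructor
  · rintro ⟨x, hx, rfl⟩
    exact hx.map hf.continuousAt tendsto_map
  · intro hy
    have : ((l.bind fun i => 𝓟 (A i)) ⊓ comap f (𝓝 y)).NeBot := by
      rw [← map_neBot_iff f, Filter.push_pull, inf_comm]
      exact hy.neBot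
    obtain ⟨x, hx⟩ := exists_clusterPt_of_compactSpace ((l.bind fun i => 𝓟 (A i)) ⊓ comap f (𝓝 y))
    exact ⟨x, hx.of_inf_left, eq_of_nhds_neBot
      (hx.of_inf_right.map hf.continuousAt tendsto_comap).neBot⟩

end LimitSet

inductive SpanKind
  | span
  | semispan
  | surjectiveSpan
  | surjectiveSemispan

namespace SpanKind

instance : Finite SpanKind :=
  Finite.of_injective (β := Fin 4)
    (fun | span => 0 | semispan => 1 | surjectiveSpan => 2 | surjectiveSemispan => 3)
    (by intro a b; cases a <;> cases b <;> simp)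

/-- The condition on `(π₁[Z], π₂[Z])` under which a kind of span requires `Z` to meet the
diagonal. -/
def Rel {α : Type*} : SpanKind → Set α → Set α → Prop
  | span, A, B => A = B
  | semispan, A, B => A ⊆ B
  | surjectiveSpan, A, B => A = univ ∧ B = univ
  | surjectiveSemispan, _, B => B = univ

def HasZero (k : SpanKind) (X : Type*) [TopologicalSpace X] : Prop :=
  ∀ Z : Set (X × X), IsClosed Z → IsConnected Z → k.Rel (Prod.fst '' Z) (Prod.snd '' Z) →
    ∃ x, (x, x) ∈ Z

lemma Rel.map {α β : Type*} {k : SpanKind} {A B : Set α} {c : Set α → Set β} (hc : Monotone c)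
    (hc_univ : c univ = univ) (h : k.Rel A B) : k.Rel (c A) (c B) := by
  cases k with
  | span => exact congrArg c h
  | semispan => exact hc h
  | surjectiveSpan => exact ⟨h.1 ▸ hc_univ, h.2 ▸ hc_univ⟩
  | surjectiveSemispan => exact h ▸ hc_univ

lemma Rel.limitSet {ι α : Type*} [TopologicalSpace α] {k : SpanKind} {l : Filter ι} [l.NeBot]
    {A B : ι → Set α} (h : ∀ᶠ i in l, k.Rel (A i) (B i)) :
    k.Rel (MetricReflection.limitSet l A) (MetricReflection.limitSet l B) := by
  cases k with
  | span => exact limitSet_congr h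
  | semispan => exact limitSet_mono h
  | surjectiveSpan => exact ⟨limitSet_eq_univ (h.mono fun _ => And.left),
      limitSet_eq_univ (h.mono fun _ => And.right)⟩
  | surjectiveSemispan => exact limitSet_eq_univ h

end SpanKind

lemma spanZero_iff {X : Type*} [TopologicalSpace X] :
    SpanZero X ↔ SpanKind.span.HasZero X :=
  Iff.rfl

lemma semispanZero_iff {X : Type*} [TopologicalSpace X] :
    SemispanZero X ↔ SpanKind.semispan.HasZero X :=
  Iff.rfl

lemma surjectiveSpanZero_iff {X : Type*} [TopologicalSpace X] :
    SurjectiveSpanZero X ↔ SpanKind.surjectiveSpan.HasZero X :=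
  forall₃_congr fun _ _ _ => and_imp.symm

lemma surjectiveSemispanZero_iff {X : Type*} [TopologicalSpace X] :
    SurjectiveSemispanZero X ↔ SpanKind.surjectiveSemispan.HasZero X :=
  Iff.rfl

lemma _root_.IsPreconnected.subset_or_subset_of_kernImage {α β : Type*} [TopologicalSpace α]
    [TopologicalSpace β] {f : α → β} (hf : IsClosedMap f) {W P Q : Set α}
    (hW : IsPreconnected (f '' W)) (hP : IsOpen P) (hQ : IsOpen Q) (hPQ : Disjoint P Q)
    (hfib : ∀ w ∈ W, f w ∈ kernImage f P ∨ f w ∈ kernImage f Q) : W ⊆ P ∨ W ⊆ Q := by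
  have hdisj : f '' W ∩ (kernImage f P ∩ kernImage f Q) = ∅ := by
    refine eq_empty_of_forall_notMem ?_
    rintro _ ⟨⟨w, -, rfl⟩, hwP, hwQ⟩
    exact hPQ.ne_of_mem (hwP rfl) (hwQ rfl) rfl
  rcases isPreconnected_iff_subset_of_disjoint.1 hW _ _ (isClosedMap_iff_kernImage.1 hf hP)
    (isClosedMap_iff_kernImage.1 hf hQ) (by rintro _ ⟨w, hw, rfl⟩; exact hfib w hw) hdisj
    with h | h
  · exact .inl fun w hw => h ⟨w, hw, rfl⟩ rfl
  · exact .inr fun w hw => h ⟨w, hw, rfl⟩ rfl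

section Reflection

variable {X : Type*} [TopologicalSpace X] [CompactSpace X] [T2Space X]

lemma exists_finset_fiber_subset_or_subset {T P Q : Set (X × X)} (hT : IsClosed T)
    (hP : IsOpen P) (hQ : IsOpen Q) (hTPQ : T ⊆ P ∪ Q) :
    ∃ N, IsOpen N ∧ T ⊆ N ∧ ∃ G₀ : Finset C(X, ℝ), ∀ G, G₀ ⊆ G → ∀ w ∈ N,
      evalMap₂ G w ∈ kernImage (evalMap₂ G) P ∨ evalMap₂ G w ∈ kernImage (evalMap₂ G) Q := by
  obtain ⟨N, hN, hTN, hNPQ⟩ := normal_exists_closure_subset hT (hP.union hQ) hTPQ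
  obtain ⟨G₀, hG₀⟩ := exists_finset_evalMap₂_fiber_subset (𝒪 := {P, Q, (closure N)ᶜ})
    (by simp [hP, hQ, isClosed_closure.isOpen_compl])
    (eq_univ_of_forall fun z => by
      by_cases hz : z ∈ closure N
      · rcases hNPQ hz with h | h
        exacts [⟨P, by simp, h⟩, ⟨Q, by simp, h⟩]
      · exact ⟨(closure N)ᶜ, by simp, hz⟩)
  refine ⟨N, hN, hTN, G₀, fun G hG w hw => ?_⟩
  obtain ⟨O, hO, hwO⟩ := hG₀ w
  have hfib := (evalMap₂_fiber_mono hG w).trans hwO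
  rcases hO with rfl | rfl | rfl
  · exact .inl fun w' hw' => hfib hw'
  · exact .inr fun w' hw' => hfib hw'
  · exact absurd (subset_closure hw) (hfib (mem_singleton _))

lemma isPreconnected_limitSet (𝓤 : Ultrafilter (Finset C(X, ℝ)))
    (h𝓤 : ∀ G, ∀ᶠ G' in (𝓤 : Filter (Finset C(X, ℝ))), G ⊆ G') {W : Finset C(X, ℝ) → Set (X × X)}
    (hW : ∀ᶠ G in 𝓤, IsPreconnected (evalMap₂ G '' W G)) :
    IsPreconnected (limitSet (𝓤 : Filter (Finset C(X, ℝ))) W) := by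
  set T := limitSet (𝓤 : Filter (Finset C(X, ℝ))) W
  have hT : IsClosed T := isClosed_limitSet _ _
  refine isPreconnected_iff_subset_of_disjoint.2 fun u v hu hv hTuv huv => ?_
  obtain ⟨P, Q, hP, hQ, hTvP, hTuQ, hPQ⟩ := normal_separation (hT.sdiff hv) (hT.sdiff hu)
    (disjoint_left.2 fun z ⟨hzT, hzv⟩ ⟨_, hzu⟩ => (hTuv hzT).elim hzu hzv)
  have hTPQ : T ⊆ P ∪ Q := fun z hz => by
    by_cases hzv : z ∈ v
    · exact .inr (hTuQ ⟨hz, fun hzu => (eq_empty_iff_forall_notMem.1 huv) z ⟨hz, hzu, hzv⟩⟩)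
    · exact .inl (hTvP ⟨hz, hzv⟩)
  obtain ⟨N, hN, hTN, G₀, hG₀⟩ := exists_finset_fiber_subset_or_subset hT hP hQ hTPQ
  have hsplit : ∀ᶠ G in 𝓤, W G ⊆ P ∨ W G ⊆ Q := by
    filter_upwards [hW, h𝓤 G₀, eventually_subset_of_limitSet_subset hN hTN] with G hWG hG hWN
    exact hWG.subset_or_subset_of_kernImage (continuous_evalMap₂ G).isClosedMap hP hQ hPQ
      fun w hw => hG₀ G hG w (hWN hw)
  have hsub : ∀ {A B s : Set (X × X)}, IsOpen B → Disjoint A B → T \ s ⊆ B →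
      (∀ᶠ G in 𝓤, W G ⊆ A) → T ⊆ s := fun hB hAB hTsB h z hz => by
    by_contra hzs
    have hzA : z ∈ closure _ :=
      limitSet_subset isClosed_closure (h.mono fun _ hG => hG.trans subset_closure) hz
    exact (hAB.closure_left hB).ne_of_mem hzA (hTsB ⟨hz, hzs⟩) rfl
  rcases Ultrafilter.eventually_or.1 hsplit with h | h
  · exact .inl (hsub hQ hPQ hTuQ h)
  · exact .inr (hsub hP hPQ.symm hTvP h)

/-- Seen through the functions in `G` only, `W` looks like a subcontinuum of `E` violating
`k.HasZero`. -/
def IsApproxWitness (k : SpanKind) (G : Finset C(X, ℝ)) (E W : Set (X × X)) : Prop :=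
  W.Nonempty ∧ W ⊆ E ∧ IsPreconnected (evalMap₂ G '' W) ∧ k.Rel (Prod.fst '' W) (Prod.snd '' W)

theorem SpanKind.HasZero.exists_finset_forall_not_isApproxWitness {k : SpanKind}
    (hX : k.HasZero X) {E : Set (X × X)} (hE : IsClosed E) (hEΔ : ∀ x, (x, x) ∉ E) :
    ∃ H : Finset C(X, ℝ), ∀ G, H ⊆ G → ∀ W, ¬ IsApproxWitness k G E W := by
  by_contra! hbad
  set C := {G | ∃ W, IsApproxWitness k G E W}
  have : (atTop ⊓ 𝓟 C).NeBot := inf_principal_neBot_iff.2 fun U hU => by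
    obtain ⟨H, hH⟩ := mem_atTop_sets.1 hU
    obtain ⟨G, hHG, hG⟩ := hbad H
    exact ⟨G, hH G hHG, hG⟩
  set 𝓤 := Ultrafilter.of (atTop ⊓ 𝓟 C)
  have hmono : ∀ H, ∀ᶠ G in (𝓤 : Filter (Finset C(X, ℝ))), H ⊆ G :=
    fun H => Ultrafilter.of_le _ (mem_inf_of_left (eventually_ge_atTop H))
  have hC : ∀ᶠ G in (𝓤 : Filter (Finset C(X, ℝ))), ∃ W, IsApproxWitness k G E W :=
    Ultrafilter.of_le _ (mem_inf_of_right (mem_principal_self C))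
  obtain ⟨W, hW⟩ := hC.choice
  obtain ⟨x, hx⟩ := hX (limitSet (𝓤 : Filter _) W) (isClosed_limitSet _ _)
    ⟨limitSet_nonempty (hW.mono fun _ h => h.1),
      isPreconnected_limitSet 𝓤 hmono (hW.mono fun _ h => h.2.2.1)⟩
    (by
      rw [image_limitSet continuous_fst, image_limitSet continuous_snd]
      exact SpanKind.Rel.limitSet (hW.mono fun _ h => h.2.2.2))
  exact hEΔ x (limitSet_subset hE (hW.mono fun _ h => h.2.1) hx)

end Reflection

section Chain

variable {X Y : Type*} [TopologicalSpace X] [TopologicalSpace Y]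

def IsChainRefinement {n : ℕ} (𝒰 : Set (Set X)) (V : Fin n → Set X) : Prop :=
  (∀ i, IsOpen (V i)) ∧ (⋃ i, V i) = univ ∧ (∀ i, ∃ u ∈ 𝒰, V i ⊆ u) ∧
    ∀ i j : Fin n, (V i ∩ V j).Nonempty ↔ |((i : ℕ) : ℤ) - ((j : ℕ) : ℤ)| ≤ 1

lemma chainable_iff : Chainable X ↔ ∀ U : Finset (Set X), (∀ u ∈ U, IsOpen u) →
    ⋃₀ (U : Set (Set X)) = univ → ∃ (n : ℕ) (V : Fin n → Set X), IsChainRefinement ↑U V :=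
  Iff.rfl

lemma IsChainRefinement.mono {n : ℕ} {𝒰 𝒰' : Set (Set X)} {V : Fin n → Set X}
    (hV : IsChainRefinement 𝒰 V) (h𝒰 : ∀ u ∈ 𝒰, ∃ u' ∈ 𝒰', u ⊆ u') :
    IsChainRefinement 𝒰' V := by
  refine ⟨hV.1, hV.2.1, fun i => ?_, hV.2.2.2⟩
  obtain ⟨u, hu, hVu⟩ := hV.2.2.1 i
  obtain ⟨u', hu', huu'⟩ := h𝒰 u hu
  exact ⟨u', hu', hVu.trans huu'⟩

lemma isChainRefinement_preimage_iff {q : X → Y} (hq : Continuous q)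
    (hqs : Function.Surjective q) {n : ℕ} {𝒰 : Set (Set Y)} {V : Fin n → Set Y}
    (hV : ∀ i, IsOpen (V i)) :
    IsChainRefinement (preimage q '' 𝒰) (fun i => q ⁻¹' V i) ↔ IsChainRefinement 𝒰 V := by
  refine and_congr (iff_of_true (fun i => (hV i).preimage hq) hV) (and_congr ?_ (and_congr ?_ ?_))
  · rw [← preimage_iUnion, ← preimage_univ (f := q), hqs.preimage_injective.eq_iff]
  · simp only [exists_mem_image, hqs.preimage_subset_preimage_iff]
  · simp only [← preimage_inter, hqs.nonempty_preimage]

variable [CompactSpace X] [T2Space X]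

lemma IsChainRefinement.exists_saturated {𝒰 : Set (Set X)} {n : ℕ} {V : Fin n → Set X}
    (hV : IsChainRefinement 𝒰 V) : ∃ (H : Finset C(X, ℝ)) (V' : Fin n → Set X),
      IsChainRefinement 𝒰 V' ∧ ∀ i, ∃ O, IsOpen O ∧ V' i = evalMap H ⁻¹' O := by
  classical
  obtain ⟨hVo, hVcov, hV𝒰, hVchain⟩ := hV
  obtain ⟨G, hG⟩ := exists_finset_evalMap_fiber_subset (𝒰 := range V)
    (by rintro _ ⟨i, rfl⟩; exact hVo i) (by rwa [sUnion_range])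
  -- shrinking the links to unions of fibres must not empty their nonempty intersections
  have hlink : ∀ p : Fin n × Fin n, ∃ g : C(X, ℝ), (V p.1 ∩ V p.2).Nonempty →
      ∃ x, ∀ y, g y = g x → y ∈ V p.1 ∩ V p.2 := by
    intro p
    by_cases hp : (V p.1 ∩ V p.2).Nonempty
    · obtain ⟨x, hx⟩ := hp
      obtain ⟨g, hgx, hg⟩ :=
        exists_continuousMap_support_subset ((hVo p.1).inter (hVo p.2)) hx
      exact ⟨g, fun _ => ⟨x, fun y hy => hg y (hy ▸ hgx)⟩⟩
    · exact ⟨0, fun h => absurd h hp⟩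
  choose g hg using hlink
  set H := G ∪ Finset.univ.image g
  have hopen : ∀ i, IsOpen (kernImage (evalMap H) (V i)) := fun i =>
    isClosedMap_iff_kernImage.1 (continuous_evalMap H).isClosedMap (hVo i)
  have hsub : ∀ i, evalMap H ⁻¹' kernImage (evalMap H) (V i) ⊆ V i := fun i x hx => hx rfl
  refine ⟨H, fun i => evalMap H ⁻¹' kernImage (evalMap H) (V i),
    ⟨fun i => (hopen i).preimage (continuous_evalMap H), ?_, fun i => ?_, fun i j => ?_⟩,
    fun i => ⟨_, hopen i, rfl⟩⟩
  · refine eq_univ_of_forall fun x => ?_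
    obtain ⟨_, ⟨i, rfl⟩, hx⟩ := hG x
    exact mem_iUnion.2 ⟨i, (evalMap_fiber_mono Finset.subset_union_left x).trans hx⟩
  · obtain ⟨u, hu, hVu⟩ := hV𝒰 i
    exact ⟨u, hu, (hsub i).trans hVu⟩
  · rw [← hVchain i j]
    refine ⟨fun h => h.mono (inter_subset_inter (hsub i) (hsub j)), fun h => ?_⟩
    obtain ⟨x, hx⟩ := hg (i, j) h
    have hxH : evalMap H ⁻¹' {evalMap H x} ⊆ V i ∩ V j := fun y hy =>
      hx y (evalMap_eq_iff.1 hy (g (i, j)) (by simp [H]))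
    exact ⟨x, fun y hy => (hxH hy).1, fun y hy => (hxH hy).2⟩

lemma _root_.Chainable.exists_saturated_isChainRefinement (hX : Chainable X) {𝒰 : Set (Set X)}
    (h𝒰 : ∀ u ∈ 𝒰, IsOpen u) (hcov : ⋃₀ 𝒰 = univ) :
    ∃ (H : Finset C(X, ℝ)) (n : ℕ) (V : Fin n → Set X),
      IsChainRefinement 𝒰 V ∧ ∀ i, ∃ O, IsOpen O ∧ V i = evalMap H ⁻¹' O := by
  obtain ⟨U, hU𝒰, hUf, hUcov⟩ := isCompact_univ.elim_finite_subcover_image (b := 𝒰) (c := id)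
    h𝒰 (by simp [← sUnion_eq_biUnion, hcov])
  obtain ⟨n, V, hV⟩ := chainable_iff.1 hX hUf.toFinset
    (fun u hu => h𝒰 u (hU𝒰 (hUf.mem_toFinset.1 hu)))
    (by simpa [sUnion_eq_biUnion] using hUcov)
  obtain ⟨H, V', hV', hsat⟩ :=
    (hV.mono fun u hu => ⟨u, hU𝒰 (hUf.mem_toFinset.1 hu), subset_rfl⟩).exists_saturated
  exact ⟨H, n, V', hV', hsat⟩

end Chain

theorem exists_range_closed {α ι : Type*} [Nonempty α] [Countable ι]
    (P : ι → Finset α → Finset α → Prop) (hP : ∀ i G, ∃ H, P i G H) :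
    ∃ e : ℕ → α, ∀ i (G : Finset α), ↑G ⊆ range e → ∃ H : Finset α, ↑H ⊆ range e ∧ P i G H := by
  classical
  choose H hH using hP
  let step (s : Set α) : Set α :=
    s ∪ ⋃ (i : ι) (G : Finset s), ↑(H i (G.map (Function.Embedding.subtype _)))
  let S (n : ℕ) : Set α := step^[n] {Classical.arbitrary α}
  have hS_succ (n : ℕ) : S (n + 1) = step (S n) := Function.iterate_succ_apply' _ _ _
  have hS : ∀ n, (S n).Countable := by
    intro n
    induction n with
    | zero => exact countable_singleton _
    | succ n ih =>
      have := ih.to_subtype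
      rw [hS_succ]
      exact ih.union (countable_iUnion fun i => countable_iUnion fun G => Finset.countable_toSet _)
  have hmono : Monotone S := monotone_nat_of_le_succ fun n => hS_succ n ▸ subset_union_left
  obtain ⟨e, he⟩ := (countable_iUnion hS).exists_eq_range ⟨_, mem_iUnion.2 ⟨0, mem_singleton _⟩⟩
  refine ⟨e, fun i G hG => ⟨H i G, ?_, hH i G⟩⟩
  rw [← he] at hG ⊢
  obtain ⟨n, hn⟩ := hmono.directed_le.exists_mem_subset_of_finset_subset_biUnion hG
  refine subset_iUnion_of_subset (n + 1) (hS_succ n ▸ subset_union_of_subset_right ?_ _)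
  refine subset_iUnion₂_of_subset i (G.subtype (· ∈ S n)) ?_
  rw [Finset.subtype_map_of_mem hn]

section Separation

variable {X : Type*} [TopologicalSpace X]

def sepSet (G : Finset C(X, ℝ)) (n : ℕ) : Set (X × X) :=
  {z | 1 / (n + 1 : ℝ) ≤ dist (evalMap G z.1) (evalMap G z.2)}

lemma isClosed_sepSet (G : Finset C(X, ℝ)) (n : ℕ) : IsClosed (sepSet G n) :=
  isClosed_le continuous_const (by fun_prop)

lemma diag_notMem_sepSet (G : Finset C(X, ℝ)) (n : ℕ) (x : X) : (x, x) ∉ sepSet G n := by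
  simp only [sepSet, mem_ofPred_eq, dist_self, not_le]
  positivity

lemma _root_.IsCompact.exists_subset_sepSet {K : Set (X × X)} (hK : IsCompact K)
    {G : Finset C(X, ℝ)} (hG : ∀ z ∈ K, evalMap G z.1 ≠ evalMap G z.2) :
    ∃ n : ℕ, K ⊆ sepSet G n := by
  rcases K.eq_empty_or_nonempty with rfl | hne
  · exact ⟨0, empty_subset _⟩
  obtain ⟨z₀, hz₀, hmin⟩ := hK.exists_isMinOn hne
    (Continuous.continuousOn (f := fun z : X × X => dist (evalMap G z.1) (evalMap G z.2))
      (by fun_prop))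
  obtain ⟨n, hn⟩ := exists_nat_one_div_lt (dist_pos.2 (hG z₀ hz₀))
  exact ⟨n, fun z hz => hn.le.trans (hmin hz)⟩

def ballCover (G : Finset C(X, ℝ)) (n : ℕ) : Set (Set X) :=
  range fun x => evalMap G ⁻¹' Metric.ball (evalMap G x) (1 / (n + 1))

end Separation

section Requirements

variable (X : Type*) [TopologicalSpace X]

/- Each requirement has one conjunct per direction of the final equivalence: the data used to
reflect the property from `X` to `Y`, and a finite witness of its failure in `X`. -/
def ChainRequirement (G : Finset C(X, ℝ)) (n : ℕ) (H : Finset C(X, ℝ)) : Prop :=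
  (Chainable X → ∃ (m : ℕ) (V : Fin m → Set X), IsChainRefinement (ballCover G n) V ∧
    ∀ i, ∃ O, IsOpen O ∧ V i = evalMap H ⁻¹' O) ∧
  (¬ Chainable X → ∃ U : Finset (Set X), (∀ u ∈ U, IsOpen u) ∧ ⋃₀ (U : Set (Set X)) = univ ∧
    (∀ x, ∃ u ∈ U, evalMap H ⁻¹' {evalMap H x} ⊆ u) ∧
    ∀ (m : ℕ) (V : Fin m → Set X), ¬ IsChainRefinement ↑U V)

def SpanRequirement (k : SpanKind) (G : Finset C(X, ℝ)) (n : ℕ) (H : Finset C(X, ℝ)) : Prop :=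
  (k.HasZero X → ∀ W, ¬ IsApproxWitness k H (sepSet G n) W) ∧
  (¬ k.HasZero X → ∃ Z : Set (X × X), IsClosed Z ∧ IsConnected Z ∧
    k.Rel (Prod.fst '' Z) (Prod.snd '' Z) ∧ ∀ z ∈ Z, evalMap H z.1 ≠ evalMap H z.2)

def Requirement : ℕ ⊕ SpanKind × ℕ → Finset C(X, ℝ) → Finset C(X, ℝ) → Prop
  | .inl n, G, H => ChainRequirement X G n H
  | .inr (k, n), G, H => SpanRequirement X k G n H

variable [CompactSpace X] [T2Space X]

lemma exists_chainRequirement (G : Finset C(X, ℝ)) (n : ℕ) : ∃ H, ChainRequirement X G n H := by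
  by_cases hX : Chainable X
  · obtain ⟨H, m, V, hV, hVH⟩ := hX.exists_saturated_isChainRefinement (𝒰 := ballCover G n)
      (by rintro _ ⟨x, rfl⟩; exact Metric.isOpen_ball.preimage (continuous_evalMap G))
      (eq_univ_of_forall fun x => ⟨_, mem_range_self x, Metric.mem_ball_self (by positivity)⟩)
    exact ⟨H, fun _ => ⟨m, V, hV, hVH⟩, fun h => absurd hX h⟩
  · have hX' := hX
    simp only [chainable_iff, not_forall, not_exists] at hX'
    obtain ⟨U, hUo, hUcov, hUnot⟩ := hX'
    obtain ⟨H, hH⟩ := exists_finset_evalMap_fiber_subset (𝒰 := (U : Set (Set X))) hUo hUcov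
    exact ⟨H, fun h => absurd h hX, fun _ => ⟨U, hUo, hUcov, hH, hUnot⟩⟩

lemma exists_spanRequirement (k : SpanKind) (G : Finset C(X, ℝ)) (n : ℕ) :
    ∃ H, SpanRequirement X k G n H := by
  by_cases hX : k.HasZero X
  · obtain ⟨H, hH⟩ := hX.exists_finset_forall_not_isApproxWitness (isClosed_sepSet G n)
      (diag_notMem_sepSet G n)
    exact ⟨H, fun _ => hH H subset_rfl, fun h => absurd hX h⟩
  · have hX' := hX
    simp only [SpanKind.HasZero, not_forall, not_exists] at hX'
    obtain ⟨Z, hZc, hZconn, hZk, hZΔ⟩ := hX'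
    obtain ⟨H, hH⟩ := exists_finset_separating hZc hZΔ
    exact ⟨H, fun h => absurd h hX, fun _ => ⟨Z, hZc, hZconn, hZk, hH⟩⟩

lemma exists_requirement (i : ℕ ⊕ SpanKind × ℕ) (G : Finset C(X, ℝ)) :
    ∃ H, Requirement X i G H :=
  match i with
  | .inl n => exists_chainRequirement X G n
  | .inr (k, n) => exists_spanRequirement X k G n

end Requirements

lemma fst_image_preimage_prodMap {X Y : Type*} {q : X → Y} (hq : Function.Surjective q)
    (Z : Set (Y × Y)) :
    Prod.fst '' (Prod.map q q ⁻¹' Z) = q ⁻¹' (Prod.fst '' Z) := by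
  ext x
  refine ⟨fun ⟨z, hz, hzx⟩ => ⟨_, hz, by rw [← hzx]; rfl⟩, fun ⟨y, hy, hyx⟩ => ?_⟩
  obtain ⟨x', hx'⟩ := hq y.2
  exact ⟨(x, x'), show (q x, q x') ∈ Z by rw [hx', ← hyx]; exact hy, rfl⟩

lemma snd_image_preimage_prodMap {X Y : Type*} {q : X → Y} (hq : Function.Surjective q)
    (Z : Set (Y × Y)) :
    Prod.snd '' (Prod.map q q ⁻¹' Z) = q ⁻¹' (Prod.snd '' Z) := by
  ext x
  refine ⟨fun ⟨z, hz, hzx⟩ => ⟨_, hz, by rw [← hzx]; rfl⟩, fun ⟨y, hy, hyx⟩ => ?_⟩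
  obtain ⟨x', hx'⟩ := hq y.1
  exact ⟨(x', x), show (q x', q x) ∈ Z by rw [hx', ← hyx]; exact hy, rfl⟩

section Induced

variable {X Y : Type*} [TopologicalSpace X] [TopologicalSpace Y]

/-- `Y` is the quotient of `X` by the functions in `S`. -/
structure IsInducedBy (q : X → Y) (S : Set C(X, ℝ)) : Prop where
  continuous : Continuous q
  surjective : Function.Surjective q
  factor : ∀ g ∈ S, ∃ φ : Y → ℝ, Continuous φ ∧ ∀ x, φ (q x) = g x
  eq_of_forall_eq : ∀ x x', (∀ g ∈ S, g x = g x') → q x = q x'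

namespace IsInducedBy

variable {q : X → Y} {S : Set C(X, ℝ)}

lemma exists_evalMap_eq_comp (hq : IsInducedBy q S) {G : Finset C(X, ℝ)} (hG : ↑G ⊆ S) :
    ∃ φ : Y → (G → ℝ), Continuous φ ∧ ∀ x, φ (q x) = evalMap G x := by
  choose φ hφ hφq using fun g : G => hq.factor g (hG g.2)
  exact ⟨fun y g => φ g y, continuous_pi hφ, fun x => funext fun g => hφq g x⟩

lemma evalMap_eq_of_eq (hq : IsInducedBy q S) {G : Finset C(X, ℝ)} (hG : ↑G ⊆ S) {x x' : X}
    (h : q x = q x') : evalMap G x = evalMap G x' := by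
  obtain ⟨φ, -, hφ⟩ := hq.exists_evalMap_eq_comp hG
  rw [← hφ, ← hφ, h]

variable [CompactSpace X]

theorem hasZero {k : SpanKind} (hq : IsInducedBy q S)
    (hS : ∀ G : Finset C(X, ℝ), ↑G ⊆ S → ∀ n, ∃ H : Finset C(X, ℝ), ↑H ⊆ S ∧
      ∀ W, ¬ IsApproxWitness k H (sepSet G n) W) :
    k.HasZero Y := by
  intro Z hZc hZconn hZk
  by_contra! hZΔ
  have hqq := hq.surjective.prodMap hq.surjective
  have hW : IsCompact (Prod.map q q ⁻¹' Z) :=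
    (hZc.preimage (hq.continuous.prodMap hq.continuous)).isCompact
  obtain ⟨G, hGS, hG⟩ := hW.exists_finset_separating (S := S) fun z hz => by
    by_contra! h
    have hz' : (q z.1, q z.2) ∈ Z := hz
    rw [← hq.eq_of_forall_eq _ _ h] at hz'
    exact hZΔ _ hz'
  obtain ⟨n, hn⟩ := hW.exists_subset_sepSet hG
  obtain ⟨H, hHS, hH⟩ := hS G hGS n
  obtain ⟨φ, hφ, hφq⟩ := hq.exists_evalMap_eq_comp hHS
  have hcomp : evalMap₂ H = Prod.map φ φ ∘ Prod.map q q :=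
    funext fun z => Prod.ext (hφq z.1).symm (hφq z.2).symm
  refine hH _ ⟨hZconn.nonempty.preimage hqq, hn, ?_, ?_⟩
  · rw [hcomp, image_comp, image_preimage_eq Z hqq]
    exact hZconn.isPreconnected.image _ (hφ.prodMap hφ).continuousOn
  · rw [fst_image_preimage_prodMap hq.surjective, snd_image_preimage_prodMap hq.surjective]
    exact hZk.map monotone_preimage preimage_univ

theorem hasZero_of_hasZero {k : SpanKind} [T2Space Y] (hq : IsInducedBy q S)
    (hS : ¬ k.HasZero X → ∃ G : Finset C(X, ℝ), ↑G ⊆ S ∧ ∃ Z : Set (X × X), IsClosed Z ∧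
      IsConnected Z ∧ k.Rel (Prod.fst '' Z) (Prod.snd '' Z) ∧
      ∀ z ∈ Z, evalMap G z.1 ≠ evalMap G z.2)
    (hY : k.HasZero Y) : k.HasZero X := by
  by_contra hX
  obtain ⟨G, hGS, Z, hZc, hZconn, hZk, hG⟩ := hS hX
  have hcont := hq.continuous.prodMap hq.continuous
  obtain ⟨y, z, hz, hzy⟩ := hY (Prod.map q q '' Z) (hZc.isCompact.image hcont).isClosed
    (hZconn.image _ hcont.continuousOn) (by
      have hfst : Prod.fst '' (Prod.map q q '' Z) = q '' (Prod.fst '' Z) := by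
        simp only [image_image]; rfl
      have hsnd : Prod.snd '' (Prod.map q q '' Z) = q '' (Prod.snd '' Z) := by
        simp only [image_image]; rfl
      rw [hfst, hsnd]
      exact hZk.map monotone_image (image_univ_of_surjective hq.surjective))
  exact hG z hz
    (hq.evalMap_eq_of_eq hGS ((congrArg Prod.fst hzy).trans (congrArg Prod.snd hzy).symm))

lemma exists_finset_fiber_subset_preimage (hq : IsInducedBy q S) {u : Set Y} (hu : IsOpen u)
    {x : X} (hx : q x ∈ u) :
    ∃ G : Finset C(X, ℝ), ↑G ⊆ S ∧ evalMap G ⁻¹' {evalMap G x} ⊆ q ⁻¹' u := by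
  have hK : IsCompact ({x} ×ˢ (q ⁻¹' u)ᶜ) :=
    isCompact_singleton.prod (hu.preimage hq.continuous).isClosed_compl.isCompact
  obtain ⟨G, hGS, hG⟩ := hK.exists_finset_separating (S := S) fun z ⟨hz₁, hz₂⟩ => by
    by_contra! h
    exact hz₂ (by rw [mem_preimage, ← hq.eq_of_forall_eq _ _ h, (hz₁ : z.1 = x)]; exact hx)
  exact ⟨G, hGS, fun y hy => not_not.1 fun hyu => hG (x, y) ⟨rfl, hyu⟩ hy.symm⟩

lemma exists_finset_forall_fiber_subset (hq : IsInducedBy q S) {𝒰 : Set (Set Y)}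
    (h𝒰 : ∀ u ∈ 𝒰, IsOpen u) (hcov : ⋃₀ 𝒰 = univ) :
    ∃ G : Finset C(X, ℝ), ↑G ⊆ S ∧ ∀ x, ∃ u ∈ 𝒰, evalMap G ⁻¹' {evalMap G x} ⊆ q ⁻¹' u := by
  classical
  have hloc : ∀ x, ∃ u ∈ 𝒰, ∃ G : Finset C(X, ℝ), ↑G ⊆ S ∧
      evalMap G ⁻¹' {evalMap G x} ⊆ q ⁻¹' u := fun x => by
    obtain ⟨u, hu, hxu⟩ := mem_sUnion.1 (hcov ▸ mem_univ (q x))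
    exact ⟨u, hu, hq.exists_finset_fiber_subset_preimage (h𝒰 u hu) hxu⟩
  choose u hu G hGS hG using hloc
  obtain ⟨t, ht⟩ := isCompact_univ.elim_finite_subcover
    (fun x => evalMap (G x) ⁻¹' kernImage (evalMap (G x)) (q ⁻¹' u x))
    (fun x => (isClosedMap_iff_kernImage.1 (continuous_evalMap _).isClosedMap
      ((h𝒰 _ (hu x)).preimage hq.continuous)).preimage (continuous_evalMap _))
    (fun x _ => mem_iUnion.2 ⟨x, hG x⟩)
  refine ⟨t.biUnion G, by simpa using fun x _ => hGS x, fun y => ?_⟩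
  obtain ⟨x, hx, hyx⟩ := mem_iUnion₂.1 (ht (mem_univ y))
  exact ⟨u x, hu x, (evalMap_fiber_mono (Finset.subset_biUnion_of_mem G hx) y).trans hyx⟩

lemma exists_finset_forall_ballCover_subset (hq : IsInducedBy q S) {𝒰 : Set (Set Y)}
    (h𝒰 : ∀ u ∈ 𝒰, IsOpen u) (hcov : ⋃₀ 𝒰 = univ) :
    ∃ G : Finset C(X, ℝ), ↑G ⊆ S ∧ ∃ n : ℕ, ∀ s ∈ ballCover G n, ∃ u ∈ 𝒰, s ⊆ q ⁻¹' u := by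
  obtain ⟨G, hGS, hG⟩ := hq.exists_finset_forall_fiber_subset h𝒰 hcov
  obtain ⟨δ, hδ, hball⟩ := lebesgue_number_lemma_of_metric_sUnion
    (isCompact_range (continuous_evalMap G)) (c := (kernImage (evalMap G) ∘ preimage q) '' 𝒰)
    (by
      rintro _ ⟨u, hu, rfl⟩
      exact isClosedMap_iff_kernImage.1 (continuous_evalMap G).isClosedMap
        ((h𝒰 u hu).preimage hq.continuous))
    (by
      rintro _ ⟨x, rfl⟩
      obtain ⟨u, hu, hxu⟩ := hG x
      exact mem_sUnion_of_mem hxu (mem_image_of_mem _ hu))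
  obtain ⟨n, hn⟩ := exists_nat_one_div_lt hδ
  refine ⟨G, hGS, n, ?_⟩
  rintro _ ⟨x, rfl⟩
  obtain ⟨_, ⟨u, hu, rfl⟩, hxu⟩ := hball _ (mem_range_self x)
  exact ⟨u, hu, fun y hy => hxu (Metric.ball_subset_ball hn.le hy) rfl⟩

theorem chainable (hq : IsInducedBy q S)
    (hS : ∀ G : Finset C(X, ℝ), ↑G ⊆ S → ∀ n, ∃ H : Finset C(X, ℝ), ↑H ⊆ S ∧
      ∃ (m : ℕ) (V : Fin m → Set X), IsChainRefinement (ballCover G n) V ∧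
        ∀ i, ∃ O, IsOpen O ∧ V i = evalMap H ⁻¹' O) :
    Chainable Y := by
  intro 𝒰 h𝒰 hcov
  obtain ⟨G, hGS, n, hG⟩ := hq.exists_finset_forall_ballCover_subset h𝒰 hcov
  obtain ⟨H, hHS, m, V, hV, hVH⟩ := hS G hGS n
  obtain ⟨φ, hφ, hφq⟩ := hq.exists_evalMap_eq_comp hHS
  choose O hO hVO using hVH
  have hpre : (fun i => q ⁻¹' (φ ⁻¹' O i)) = V := funext fun i => by
    rw [hVO i, ← preimage_comp, show φ ∘ q = evalMap H from funext hφq]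
  refine ⟨m, fun i => φ ⁻¹' O i, (isChainRefinement_preimage_iff hq.continuous hq.surjective
    fun i => (hO i).preimage hφ).1 ?_⟩
  rw [hpre]
  exact hV.mono fun s hs => let ⟨u, hu, hsu⟩ := hG s hs; ⟨_, mem_image_of_mem _ hu, hsu⟩

theorem chainable_of_chainable (hq : IsInducedBy q S)
    (hS : ¬ Chainable X → ∃ G : Finset C(X, ℝ), ↑G ⊆ S ∧ ∃ U : Finset (Set X),
      (∀ u ∈ U, IsOpen u) ∧ ⋃₀ (U : Set (Set X)) = univ ∧
      (∀ x, ∃ u ∈ U, evalMap G ⁻¹' {evalMap G x} ⊆ u) ∧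
      ∀ (n : ℕ) (V : Fin n → Set X), ¬ IsChainRefinement ↑U V)
    (hY : Chainable Y) : Chainable X := by
  classical
  by_contra hX
  obtain ⟨G, hGS, U, hUo, hUcov, hUG, hUnot⟩ := hS hX
  obtain ⟨φ, hφ, hφq⟩ := hq.exists_evalMap_eq_comp hGS
  set w : Set X → Set Y := fun u => φ ⁻¹' kernImage (evalMap G) u
  obtain ⟨n, V, hV⟩ := chainable_iff.1 hY (U.image w)
    (by
      simp only [Finset.mem_image]
      rintro _ ⟨u, hu, rfl⟩
      exact (isClosedMap_iff_kernImage.1 (continuous_evalMap G).isClosedMap (hUo u hu)).preimage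
        hφ)
    (eq_univ_of_forall fun y => by
      obtain ⟨x, rfl⟩ := hq.surjective y
      obtain ⟨u, hu, hxu⟩ := hUG x
      exact ⟨w u, Finset.mem_coe.2 (Finset.mem_image_of_mem w hu),
        show φ (q x) ∈ kernImage (evalMap G) u from (hφq x).symm ▸ hxu⟩)
  refine hUnot n (fun i => q ⁻¹' V i)
    (((isChainRefinement_preimage_iff hq.continuous hq.surjective hV.1).2 hV).mono ?_)
  rintro _ ⟨_, hw, rfl⟩
  obtain ⟨u, hu, rfl⟩ := Finset.mem_image.1 (Finset.mem_coe.1 hw)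
  exact ⟨u, hu, fun x hx => (show evalMap G x ∈ kernImage (evalMap G) u from hφq x ▸ hx) rfl⟩

theorem chainable_iff_chainable (hq : IsInducedBy q S)
    (hS : ∀ G : Finset C(X, ℝ), ↑G ⊆ S → ∀ n, ∃ H, ↑H ⊆ S ∧ ChainRequirement X G n H) :
    Chainable Y ↔ Chainable X :=
  ⟨hq.chainable_of_chainable fun hX =>
      let ⟨H, hHS, hH⟩ := hS ∅ (by simp) 0; ⟨H, hHS, hH.2 hX⟩,
    fun hX => hq.chainable fun G hG n => let ⟨H, hHS, hH⟩ := hS G hG n; ⟨H, hHS, hH.1 hX⟩⟩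

theorem hasZero_iff_hasZero [T2Space Y] {k : SpanKind} (hq : IsInducedBy q S)
    (hS : ∀ G : Finset C(X, ℝ), ↑G ⊆ S → ∀ n, ∃ H, ↑H ⊆ S ∧ SpanRequirement X k G n H) :
    k.HasZero Y ↔ k.HasZero X :=
  ⟨hq.hasZero_of_hasZero fun hX =>
      let ⟨H, hHS, hH⟩ := hS ∅ (by simp) 0; ⟨H, hHS, hH.2 hX⟩,
    fun hX => hq.hasZero fun G hG n => let ⟨H, hHS, hH⟩ := hS G hG n; ⟨H, hHS, hH.1 hX⟩⟩

end IsInducedBy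

end Induced

lemma isInducedBy_rangeFactorization {X : Type*} [TopologicalSpace X] (e : ℕ → C(X, ℝ)) :
    IsInducedBy (rangeFactorization fun x n => e n x) (range e) where
  continuous := (continuous_pi fun n => (e n).continuous).subtype_mk _
  surjective := rangeFactorization_surjective
  factor := by
    rintro _ ⟨n, rfl⟩
    exact ⟨fun y => y.1 n, (continuous_apply n).comp continuous_subtype_val, fun x => rfl⟩
  eq_of_forall_eq x x' h := Subtype.ext (funext fun n => h (e n) (mem_range_self n))

end MetricReflection

open MetricReflection in
theorem metric_reflection (X : Type*) [TopologicalSpace X]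
    [CompactSpace X] [T2Space X] [ConnectedSpace X] :
    ∃ (Y : Type) (_ : TopologicalSpace Y),
      TopologicalSpace.MetrizableSpace Y ∧ CompactSpace Y ∧ T2Space Y ∧ ConnectedSpace Y ∧
      ∃ q : X → Y, Continuous q ∧ Function.Surjective q ∧
        (Chainable Y ↔ Chainable X) ∧
        (SpanZero Y ↔ SpanZero X) ∧
        (SemispanZero Y ↔ SemispanZero X) ∧
        (SurjectiveSpanZero Y ↔ SurjectiveSpanZero X) ∧
        (SurjectiveSemispanZero Y ↔ SurjectiveSemispanZero X) := by
  obtain ⟨e, he⟩ := exists_range_closed (Requirement X) (exists_requirement X)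
  have hq := isInducedBy_rangeFactorization e
  have hspan (k : SpanKind) := hq.hasZero_iff_hasZero fun G hG n => he (.inr (k, n)) G hG
  simp only [spanZero_iff, semispanZero_iff, surjectiveSpanZero_iff, surjectiveSemispanZero_iff]
  exact ⟨_, inferInstance, inferInstance,
    isCompact_iff_compactSpace.1 (isCompact_range (continuous_subtype_val.comp hq.continuous)),
    inferInstance, hq.surjective.connectedSpace hq.continuous, _, hq.continuous, hq.surjective,
    hq.chainable_iff_chainable fun G hG n => he (.inl n) G hG, hspan _, hspan _, hspan _,
    hspan _⟩
end

section
/- If there exists a continuum which has span zero and is not chainable, then there exists a metrizable continuum which has span zero and is not chainable. -/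
/-!
Since `X` has span zero, a compactness argument with ultrafilter limits shows that for every
closed `K ⊆ X × X` missing the diagonal there are finitely many continuous functions `S` and an
`ε > 0` such that no subset of `K` is an `(S, ε)`-approximation of a subcontinuum with equal
projections (an upper limit of such approximations would be a subcontinuum of `K` with equal
projections). Start from a partition of unity subordinate to an open cover of `X` without chain
refinement and close it off under this operation: this gives countably many functions `F n`,
and the image `Y` of `x ↦ (F n x)ₙ` in `ℝ^ℕ` is a metrizable continuum. The bad cover of `X` is
refined by the preimage of an open cover of `Y`, so `Y` is not chainable; and a subcontinuum of
`Y × Y` violating span zero lies in some `{|F n y₁ - F n y₂| ≥ δ}`, so its preimage in `X × X` is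
an approximation forbidden by functions that were added to the family.
-/

open Set Filter Topology
open scoped Classical

section UltraLimit

variable {ι C : Type*} [TopologicalSpace C]

/-- The Kuratowski limit of the sets `A i` along `U`. -/
def ultraLimit (U : Ultrafilter ι) (A : ι → Set C) : Set C :=
  {z | ∀ N ∈ 𝓝 z, ∀ᶠ i in (U : Filter ι), (A i ∩ N).Nonempty}

variable (U : Ultrafilter ι) (A : ι → Set C)

theorem isClosed_ultraLimit : IsClosed (ultraLimit U A) := by
  refine isClosed_iff_nhds.2 fun z hz N hN => ?_
  obtain ⟨O, hON, hO, hzO⟩ := mem_nhds_iff.1 hN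
  obtain ⟨w, hwO, hw⟩ := hz O (hO.mem_nhds hzO)
  exact (hw O (hO.mem_nhds hwO)).mono fun i => Nonempty.mono (inter_subset_inter_right _ hON)

theorem mem_ultraLimit_of_tendsto {z : ι → C} {w : C} (hz : ∀ᶠ i in (U : Filter ι), z i ∈ A i)
    (hw : Tendsto z U (𝓝 w)) : w ∈ ultraLimit U A := fun _ hN =>
  (hz.and (hw hN)).mono fun i hi => ⟨z i, hi⟩

theorem ultraLimit_subset {K : Set C} (hK : IsClosed K)
    (hA : ∀ᶠ i in (U : Filter ι), A i ⊆ K) : ultraLimit U A ⊆ K := fun z hz => by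
  by_contra hzK
  obtain ⟨i, ⟨x, hxA, hxK⟩, hAK⟩ := ((hz _ (hK.isOpen_compl.mem_nhds hzK)).and hA).exists
  exact hxK (hAK hxA)

variable [CompactSpace C]

theorem exists_mem_ultraLimit_mem_closure {M : Set C}
    (h : ∀ᶠ i in (U : Filter ι), (A i ∩ M).Nonempty) :
    ∃ z ∈ ultraLimit U A, z ∈ closure M := by
  obtain ⟨-, x, -⟩ := h.exists
  have : Nonempty C := ⟨x⟩
  choose! z hz using fun i (hi : (A i ∩ M).Nonempty) => hi
  obtain ⟨w, -, hw⟩ := isCompact_univ.ultrafilter_le_nhds (U.map z) (by simp)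
  exact ⟨w, mem_ultraLimit_of_tendsto U A (h.mono fun i hi => (hz i hi).1) hw,
    mem_closure_of_tendsto hw (h.mono fun i hi => (hz i hi).2)⟩

theorem ultraLimit_nonempty (hA : ∀ᶠ i in (U : Filter ι), (A i).Nonempty) :
    (ultraLimit U A).Nonempty := by
  obtain ⟨z, hz, -⟩ := exists_mem_ultraLimit_mem_closure U A (M := univ) (by simpa using hA)
  exact ⟨z, hz⟩

theorem eventually_subset_of_ultraLimit_subset {W : Set C} (hW : IsOpen W)
    (h : ultraLimit U A ⊆ W) : ∀ᶠ i in (U : Filter ι), A i ⊆ W := by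
  by_contra hA
  obtain ⟨z, hz, hzW⟩ := exists_mem_ultraLimit_mem_closure U A (M := Wᶜ)
    ((Ultrafilter.eventually_not.2 hA).mono fun i hi => not_subset.1 hi)
  rw [hW.isClosed_compl.closure_eq] at hzW
  exact hzW (h hz)

theorem image_ultraLimit {C' : Type*} [TopologicalSpace C'] [T2Space C'] {f : C → C'}
    (hf : Continuous f) : f '' ultraLimit U A = ultraLimit U (fun i => f '' A i) := by
  refine Subset.antisymm ?_ fun x hx => ?_
  · rintro _ ⟨z, hz, rfl⟩ N hN
    exact (hz _ (hf.continuousAt hN)).mono fun i ⟨w, hwA, hwN⟩ => ⟨f w, mem_image_of_mem f hwA, hwN⟩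
  by_contra hxL
  obtain ⟨V, W, hV, hW, hxV, hLW, hVW⟩ := SeparatedNhds.of_isCompact_isCompact isCompact_singleton
    ((isClosed_ultraLimit U A).isCompact.image hf) (disjoint_singleton_left.2 hxL)
  have hAW := eventually_subset_of_ultraLimit_subset U A (hW.preimage hf) (image_subset_iff.1 hLW)
  obtain ⟨i, ⟨_, ⟨y, hyA, rfl⟩, hyV⟩, hiW⟩ := ((hx V (hV.mem_nhds (hxV rfl))).and hAW).exists
  exact disjoint_left.1 hVW hyV (hiW hyA)

end UltraLimit

section Near

variable {X Y : Type*} [TopologicalSpace X] [TopologicalSpace Y]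

def Near (S : Finset C(X, ℝ)) (ε : ℝ) (x y : X) : Prop := ∀ f ∈ S, |f x - f y| < ε

def PairNear (S : Finset C(X, ℝ)) (ε : ℝ) (p q : X × X) : Prop :=
  Near S ε p.1 q.1 ∧ Near S ε p.2 q.2

variable {S S' : Finset C(X, ℝ)} {ε ε' : ℝ}

theorem near_refl (hε : 0 < ε) (x : X) : Near S ε x x := fun f _ => by simpa using hε

theorem Near.symm {x y : X} (h : Near S ε x y) : Near S ε y x := fun f hf =>
  abs_sub_comm (f x) (f y) ▸ h f hf

theorem Near.mono {x y : X} (h : Near S ε x y) (hS : S' ⊆ S) (hε : ε ≤ ε') : Near S' ε' x y :=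
  fun f hf => (h f (hS hf)).trans_le hε

theorem Near.trans {x y z : X} (hxy : Near S ε x y) (hyz : Near S ε' y z) :
    Near S (ε + ε') x z := fun f hf =>
  (abs_sub_le _ _ _).trans_lt (add_lt_add (hxy f hf) (hyz f hf))

theorem isOpen_setOf_near (S : Finset C(X, ℝ)) (ε : ℝ) (x : X) : IsOpen {y | Near S ε x y} := by
  simp only [Near, ofPred_forall]
  exact isOpen_biInter_finset fun f _ => isOpen_lt (by fun_prop) continuous_const

theorem near_image_comp_iff {π : C(X, Y)} {S : Finset C(Y, ℝ)} {x y : X} :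
    Near (S.image (·.comp π)) ε x y ↔ Near S ε (π x) (π y) := by
  simp [Near]

theorem pairNear_refl (hε : 0 < ε) (p : X × X) : PairNear S ε p p :=
  ⟨near_refl hε p.1, near_refl hε p.2⟩

theorem PairNear.symm {p q : X × X} (h : PairNear S ε p q) : PairNear S ε q p :=
  ⟨h.1.symm, h.2.symm⟩

theorem PairNear.mono {p q : X × X} (h : PairNear S ε p q) (hS : S' ⊆ S) (hε : ε ≤ ε') :
    PairNear S' ε' p q :=
  ⟨h.1.mono hS hε, h.2.mono hS hε⟩

theorem PairNear.trans {p q r : X × X} (hpq : PairNear S ε p q) (hqr : PairNear S ε' q r) :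
    PairNear S (ε + ε') p r :=
  ⟨hpq.1.trans hqr.1, hpq.2.trans hqr.2⟩

theorem isOpen_setOf_pairNear (S : Finset C(X, ℝ)) (ε : ℝ) (p : X × X) :
    IsOpen {q | PairNear S ε p q} :=
  ((isOpen_setOf_near S ε p.1).preimage continuous_fst).inter
    ((isOpen_setOf_near S ε p.2).preimage continuous_snd)

theorem pairNear_image_comp_iff {π : C(X, Y)} {S : Finset C(Y, ℝ)} {p q : X × X} :
    PairNear (S.image (·.comp π)) ε p q ↔ PairNear S ε (Prod.map π π p) (Prod.map π π q) :=
  and_congr near_image_comp_iff near_image_comp_iff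

variable [CompletelyRegularSpace X]

theorem exists_near_subset {x : X} {O : Set X} (hO : IsOpen O) (hx : x ∈ O) :
    ∃ S : Finset C(X, ℝ), {y | Near S 1 x y} ⊆ O := by
  obtain ⟨f, hf, hfx, hfO⟩ := CompletelyRegularSpace.completely_regular_isOpen x O hO hx
  refine ⟨{⟨fun y => f y, continuous_subtype_val.comp hf⟩}, fun y hy => ?_⟩
  by_contra hyO
  have := hy _ (Finset.mem_singleton_self _)
  simp [hfx, hfO hyO] at this

theorem exists_pairNear_subset {p : X × X} {W : Set (X × X)} (hW : IsOpen W) (hp : p ∈ W) :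
    ∃ S : Finset C(X, ℝ), {q | PairNear S 1 p q} ⊆ W := by
  obtain ⟨O₁, O₂, hO₁, hO₂, hp₁, hp₂, hO⟩ := isOpen_prod_iff.1 hW p.1 p.2 hp
  obtain ⟨S₁, hS₁⟩ := exists_near_subset hO₁ hp₁
  obtain ⟨S₂, hS₂⟩ := exists_near_subset hO₂ hp₂
  exact ⟨S₁ ∪ S₂, fun q hq => hO ⟨hS₁ (hq.1.mono Finset.subset_union_left le_rfl),
    hS₂ (hq.2.mono Finset.subset_union_right le_rfl)⟩⟩

theorem exists_forall_not_pairNear {P Q : Set (X × X)} (hP : IsCompact P) (hQ : IsClosed Q)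
    (hPQ : Disjoint P Q) : ∃ S : Finset C(X, ℝ), ∀ p ∈ P, ∀ q ∈ Q, ¬ PairNear S (1 / 2) p q := by
  choose! T hT using fun p (hp : p ∈ P) =>
    exists_pairNear_subset hQ.isOpen_compl (disjoint_left.1 hPQ hp)
  obtain ⟨t, htP, hPt⟩ := hP.elim_nhds_subcover (fun p => {q | PairNear (T p) (1 / 2) p q})
    fun p _ => (isOpen_setOf_pairNear _ _ p).mem_nhds (pairNear_refl (by norm_num) p)
  refine ⟨t.biUnion T, fun p hp q hq hpq => ?_⟩
  obtain ⟨p', hp't, hp'p⟩ := mem_iUnion₂.1 (hPt hp)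
  have hp'q : PairNear (T p') 1 p' q :=
    (hp'p.trans (hpq.mono (Finset.subset_biUnion_of_mem T hp't) le_rfl)).mono subset_rfl
      (by norm_num)
  exact hT p' (htP p' hp't) hp'q hq

end Near

theorem Relation.ReflTransGen.exists_mem_notMem {α : Type*} {r : α → α → Prop} {u : Set α}
    {p q : α} (h : Relation.ReflTransGen r p q) (hp : p ∈ u) (hq : q ∉ u) :
    ∃ a b, a ∈ u ∧ b ∉ u ∧ r a b := by
  induction h with
  | refl => exact absurd hp hq
  | @tail b c _ hbc ih =>
    by_cases hb : b ∈ u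
    · exact ⟨b, c, hb, hq, hbc⟩
    · exact ih hb

theorem Relation.ReflTransGen.of_surjective_map {α β : Type*} {f : α → β}
    (hf : Function.Surjective f) {r : β → β → Prop} {a b : α} (hr : r (f a) (f a))
    (h : Relation.ReflTransGen r (f a) (f b)) :
    Relation.ReflTransGen (fun x y => r (f x) (f y)) a b := by
  generalize hc : f b = c at h
  induction h generalizing b with
  | refl => exact .single (hc ▸ hr)
  | @tail c d _ hcd ih =>
    obtain ⟨c', rfl⟩ := hf c
    exact (ih rfl).tail (hc ▸ hcd)

section SpanApprox

variable {X Y : Type*} [TopologicalSpace X] [TopologicalSpace Y]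

/-- `L ⊆ K` is an `(S, ε)`-approximation of a subcontinuum with equal projections: it is
`(S, ε)`-chain connected, and each of its projections is `(S, ε)`-dense in the other. -/
def SpanApprox (S : Finset C(X, ℝ)) (ε : ℝ) (K L : Set (X × X)) : Prop :=
  L.Nonempty ∧ L ⊆ K ∧
    (∀ p ∈ L, ∀ q ∈ L, Relation.ReflTransGen (fun a b => b ∈ L ∧ PairNear S ε a b) p q) ∧
    (∀ p ∈ L, ∃ q ∈ L, Near S ε p.1 q.2) ∧ (∀ p ∈ L, ∃ q ∈ L, Near S ε p.2 q.1)

theorem IsConnected.spanApprox {Z K : Set (X × X)} (hZ : IsConnected Z) (hZK : Z ⊆ K)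
    (hproj : Prod.fst '' Z = Prod.snd '' Z) (S : Finset C(X, ℝ)) {ε : ℝ} (hε : 0 < ε) :
    SpanApprox S ε K Z := by
  refine ⟨hZ.nonempty, hZK, fun p hp q hq => ?_, fun p hp => ?_, fun p hp => ?_⟩
  · refine hZ.isPreconnected.induction₂' _ (fun a ha => ?_) (fun _ _ _ _ _ _ => .trans) hp hq
    filter_upwards [self_mem_nhdsWithin, mem_nhdsWithin_of_mem_nhds
      ((isOpen_setOf_pairNear S ε a).mem_nhds (pairNear_refl hε a))] with b hbZ hab
    exact ⟨.single ⟨hbZ, hab⟩, .single ⟨ha, hab.symm⟩⟩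
  · obtain ⟨q, hq, hqp⟩ : p.1 ∈ Prod.snd '' Z := hproj ▸ mem_image_of_mem _ hp
    exact ⟨q, hq, hqp ▸ near_refl hε _⟩
  · obtain ⟨q, hq, hqp⟩ : p.2 ∈ Prod.fst '' Z := hproj ▸ mem_image_of_mem _ hp
    exact ⟨q, hq, hqp ▸ near_refl hε _⟩

theorem SpanApprox.preimage {π : C(X, Y)} (hπ : Function.Surjective π) {S : Finset C(Y, ℝ)}
    {ε : ℝ} (hε : 0 < ε) {K L : Set (Y × Y)} (h : SpanApprox S ε K L) :
    SpanApprox (S.image (·.comp π)) ε (Prod.map π π ⁻¹' K) (Prod.map π π ⁻¹' L) := by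
  have hπ₂ : Function.Surjective (Prod.map π π) := hπ.prodMap hπ
  obtain ⟨hne, hLK, hchain, hfst, hsnd⟩ := h
  refine ⟨hne.preimage hπ₂, preimage_mono hLK, fun p hp q hq => ?_, fun p hp => ?_,
    fun p hp => ?_⟩
  · exact Relation.ReflTransGen.mono (fun a b hab => ⟨hab.1, pairNear_image_comp_iff.2 hab.2⟩) _ _
      (Relation.ReflTransGen.of_surjective_map hπ₂ ⟨hp, pairNear_refl hε _⟩ (hchain _ hp _ hq))
  · obtain ⟨w, hw, hpw⟩ := hfst _ hp
    obtain ⟨q, rfl⟩ := hπ₂ w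
    exact ⟨q, hw, near_image_comp_iff.2 hpw⟩
  · obtain ⟨w, hw, hpw⟩ := hsnd _ hp
    obtain ⟨q, rfl⟩ := hπ₂ w
    exact ⟨q, hw, near_image_comp_iff.2 hpw⟩

end SpanApprox

section Limits

variable {X : Type*} [TopologicalSpace X] [CompletelyRegularSpace X]
  (U : Ultrafilter (Finset C(X, ℝ) × ℕ))

theorem ultraLimit_subset_of_near (hU : (U : Filter (Finset C(X, ℝ) × ℕ)) ≤ atTop)
    {D E : Finset C(X, ℝ) × ℕ → Set X}
    (hDE : ∀ i, ∀ d ∈ D i, ∃ e ∈ E i, Near i.1 (1 / (i.2 + 1)) d e) :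
    ultraLimit U D ⊆ ultraLimit U E := by
  intro x hx N hN
  obtain ⟨S₀, hS₀⟩ := exists_near_subset isOpen_interior (mem_interior_iff_mem_nhds.2 hN)
  filter_upwards [hx _ ((isOpen_setOf_near S₀ (1 / 2) x).mem_nhds (near_refl (by norm_num) x)),
    hU (eventually_ge_atTop (S₀, 1))] with i ⟨d, hdD, hxd⟩ hi
  obtain ⟨e, heE, hde⟩ := hDE i d hdD
  have hε : (1 : ℝ) / (i.2 + 1) ≤ 1 / 2 := (Nat.one_div_le_one_div hi.2).trans_eq (by norm_num)
  exact ⟨e, heE, interior_subset (hS₀ ((hxd.trans (hde.mono hi.1 hε)).mono subset_rfl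
    (by norm_num)))⟩

theorem isPreconnected_ultraLimit [CompactSpace X] (hU : (U : Filter (Finset C(X, ℝ) × ℕ)) ≤ atTop)
    {A : Finset C(X, ℝ) × ℕ → Set (X × X)}
    (hA : ∀ i, ∀ p ∈ A i, ∀ q ∈ A i,
      Relation.ReflTransGen (fun a b => b ∈ A i ∧ PairNear i.1 (1 / (i.2 + 1)) a b) p q) :
    IsPreconnected (ultraLimit U A) := by
  set Z := ultraLimit U A
  refine isPreconnected_closed_iff.2 fun t t' ht ht' hZtt' hZt hZt' => ?_
  by_contra hZ
  obtain ⟨S₀, hS₀⟩ := exists_forall_not_pairNear ((isClosed_ultraLimit U A).inter ht).isCompact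
    ((isClosed_ultraLimit U A).inter ht')
    (disjoint_left.2 fun p hp hp' => hZ ⟨p, hp.1, hp.2, hp'.2⟩)
  -- Thicken the two closed pieces of `Z` into open sets that no `(S₀, 1/8)`-step can cross.
  set u := ⋃ p ∈ Z ∩ t, {r | PairNear S₀ (1 / 8) p r}
  set v := ⋃ p ∈ Z ∩ t', {r | PairNear S₀ (1 / 8) p r}
  have hu : IsOpen u := isOpen_biUnion fun p _ => isOpen_setOf_pairNear _ _ p
  have hv : IsOpen v := isOpen_biUnion fun p _ => isOpen_setOf_pairNear _ _ p
  have hgap : ∀ r ∈ u, ∀ s ∈ v, ¬ PairNear S₀ (1 / 8) r s := by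
    intro r hr s hs hrs
    obtain ⟨p, hp, hpr⟩ := mem_iUnion₂.1 hr
    obtain ⟨q, hq, hqs⟩ := mem_iUnion₂.1 hs
    exact hS₀ p hp q hq (((hpr.trans hrs).trans hqs.symm).mono subset_rfl (by norm_num))
  have hZtu : Z ∩ t ⊆ u := fun z hz => mem_biUnion hz (pairNear_refl (by norm_num) z)
  have hZt'v : Z ∩ t' ⊆ v := fun z hz => mem_biUnion hz (pairNear_refl (by norm_num) z)
  have hZuv : Z ⊆ u ∪ v := fun z hz =>
    (hZtt' hz).imp (fun h => hZtu ⟨hz, h⟩) (fun h => hZt'v ⟨hz, h⟩)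
  obtain ⟨z, hz⟩ := hZt
  obtain ⟨z', hz'⟩ := hZt'
  obtain ⟨i, hAuv, ⟨a, haA, hau⟩, ⟨b, hbA, hbv⟩, hi⟩ :=
    ((eventually_subset_of_ultraLimit_subset U A (hu.union hv) hZuv).and
      ((hz.1 u (hu.mem_nhds (hZtu hz))).and
        ((hz'.1 v (hv.mem_nhds (hZt'v hz'))).and (hU (eventually_ge_atTop (S₀, 7)))))).exists
  have hbu : b ∉ u := fun hbu => hgap b hbu b hbv (pairNear_refl (by norm_num) b)
  obtain ⟨a', b', ha'u, hb'u, hb'A, ha'b'⟩ := (hA i a haA b hbA).exists_mem_notMem hau hbu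
  have hε : (1 : ℝ) / (i.2 + 1) ≤ 1 / 8 := (Nat.one_div_le_one_div hi.2).trans_eq (by norm_num)
  exact hgap a' ha'u b' ((hAuv hb'A).resolve_left hb'u) (ha'b'.mono hi.1 hε)

end Limits

theorem SpanZero.exists_forall_not_spanApprox {X : Type*} [TopologicalSpace X] [CompactSpace X]
    [T2Space X] (hspan : SpanZero X) {K : Set (X × X)} (hK : IsClosed K)
    (hKd : ∀ x, (x, x) ∉ K) :
    ∃ (S : Finset C(X, ℝ)) (m : ℕ), ∀ L, ¬ SpanApprox S (1 / (m + 1)) K L := by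
  by_contra! h
  choose A hA using h
  set U := Ultrafilter.of (atTop : Filter (Finset C(X, ℝ) × ℕ))
  have hU : (U : Filter (Finset C(X, ℝ) × ℕ)) ≤ atTop := Ultrafilter.of_le _
  set Z := ultraLimit U fun i => A i.1 i.2
  have hproj : Prod.fst '' Z = Prod.snd '' Z := by
    rw [image_ultraLimit U _ continuous_fst, image_ultraLimit U _ continuous_snd]
    refine (ultraLimit_subset_of_near U hU ?_).antisymm (ultraLimit_subset_of_near U hU ?_)
    · rintro i _ ⟨p, hp, rfl⟩
      obtain ⟨q, hq, hpq⟩ := (hA i.1 i.2).2.2.2.1 p hp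
      exact ⟨q.2, mem_image_of_mem _ hq, hpq⟩
    · rintro i _ ⟨p, hp, rfl⟩
      obtain ⟨q, hq, hpq⟩ := (hA i.1 i.2).2.2.2.2 p hp
      exact ⟨q.1, mem_image_of_mem _ hq, hpq⟩
  obtain ⟨x, hx⟩ := hspan Z (isClosed_ultraLimit U _)
    ⟨ultraLimit_nonempty U _ (.of_forall fun i => (hA i.1 i.2).1),
      isPreconnected_ultraLimit U hU fun i => (hA i.1 i.2).2.2.1⟩ hproj
  exact hKd x (ultraLimit_subset U _ hK (.of_forall fun i => (hA i.1 i.2).2.1) hx)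

section Apart

variable {X Y : Type*} [TopologicalSpace X] [TopologicalSpace Y]

/-- Thresholds are `1 / (j + 1)` so that each `T` gives only countably many sets `Apart T j`. -/
def Apart (T : Finset C(X, ℝ)) (j : ℕ) : Set (X × X) :=
  ⋃ f ∈ T, {p | 1 / (j + 1 : ℝ) ≤ |f p.1 - f p.2|}

theorem isClosed_apart (T : Finset C(X, ℝ)) (j : ℕ) : IsClosed (Apart T j) :=
  isClosed_biUnion_finset fun _ _ => isClosed_le continuous_const (by fun_prop)

theorem mk_self_notMem_apart (T : Finset C(X, ℝ)) (j : ℕ) (x : X) : (x, x) ∉ Apart T j := by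
  simp only [Apart, mem_iUnion₂, mem_ofPred_eq, sub_self, abs_zero, not_exists, not_le]
  exact fun _ _ => by positivity

theorem preimage_apart (π : C(X, Y)) (T : Finset C(Y, ℝ)) (j : ℕ) :
    Prod.map π π ⁻¹' Apart T j = Apart (T.image (·.comp π)) j := by
  simp [Apart]

theorem IsCompact.exists_subset_apart {ι : Type*} {F : ι → C(Y, ℝ)}
    (hF : ∀ y y', (∀ i, F i y = F i y') → y = y') {Z : Set (Y × Y)} (hZ : IsCompact Z)
    (hZd : ∀ y, (y, y) ∉ Z) : ∃ (T : Finset ι) (j : ℕ), Z ⊆ Apart (T.image F) j := by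
  set O : Finset ι × ℕ → Set (Y × Y) := fun Tj =>
    ⋃ i ∈ Tj.1, {p | 1 / (Tj.2 + 1 : ℝ) < |F i p.1 - F i p.2|}
  have hO : ∀ Tj, IsOpen (O Tj) := fun Tj =>
    isOpen_biUnion fun _ _ => isOpen_lt continuous_const (by fun_prop)
  have hZO : Z ⊆ ⋃ Tj, O Tj := by
    rintro ⟨y, y'⟩ hp
    obtain ⟨i, hi⟩ : ∃ i, F i y ≠ F i y' := by
      by_contra! h
      obtain rfl := hF _ _ h
      exact hZd y hp
    obtain ⟨j, hj⟩ := exists_nat_one_div_lt (abs_pos.2 (sub_ne_zero.2 hi))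
    exact mem_iUnion.2 ⟨({i}, j), mem_biUnion (Finset.mem_singleton_self i) hj⟩
  have hOmono : Monotone O := fun Tj Tj' h => iUnion₂_mono' fun i hi =>
    ⟨i, h.1 hi, ofPred_subset_ofPred.2 fun _ => (Nat.one_div_le_one_div h.2).trans_lt⟩
  obtain ⟨⟨T, j⟩, hZT⟩ := hZ.elim_directed_cover O hO hZO hOmono.directed_le
  exact ⟨T, j, hZT.trans (iUnion₂_mono' fun i hi => ⟨F i, Finset.mem_image_of_mem F hi,
    ofPred_subset_ofPred.2 fun _ => le_of_lt⟩)⟩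

theorem spanZero_of_surjective [CompactSpace Y] {π : C(X, Y)} (hπ : Function.Surjective π)
    {ι : Type*} {F : ι → C(Y, ℝ)} (hF : ∀ y y', (∀ i, F i y = F i y') → y = y')
    (hkill : ∀ (T : Finset ι) (j : ℕ), ∃ (S : Finset C(Y, ℝ)) (m : ℕ), ∀ L,
      ¬ SpanApprox (S.image (·.comp π)) (1 / (m + 1)) (Apart ((T.image F).image (·.comp π)) j) L) :
    SpanZero Y := by
  intro Z hZc hZ hproj
  by_contra! hZd
  obtain ⟨T, j, hZT⟩ := hZc.isCompact.exists_subset_apart hF hZd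
  obtain ⟨S, m, hS⟩ := hkill T j
  rw [← preimage_apart] at hS
  exact hS _ ((hZ.spanApprox hZT hproj S (by positivity)).preimage hπ (by positivity))

end Apart

theorem Set.Countable.exists_superset_closed {α : Type*} {G₀ : Set α} (hG₀ : G₀.Countable)
    (k : Finset α → Set α) (hk : ∀ T, (k T).Countable) :
    ∃ G : Set α, G₀ ⊆ G ∧ G.Countable ∧ ∀ T : Finset α, ↑T ⊆ G → k T ⊆ G := by
  set Gs : ℕ → Set α := fun n => Nat.rec G₀ (fun _ G => G ∪ ⋃ T ∈ {T : Finset α | ↑T ⊆ G}, k T) n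
  have hmono : Monotone Gs := monotone_nat_of_le_succ fun _ => subset_union_left
  have hcount : ∀ n, (Gs n).Countable := by
    intro n
    induction n with
    | zero => exact hG₀
    | succ n ih =>
      have hfin : {T : Finset α | ↑T ⊆ Gs n}.Countable := by
        refine ((countable_ofPred_finite_subset ih).preimage Finset.coe_injective).mono ?_
        exact fun T hT => ⟨T.finite_toSet, hT⟩
      exact ih.union (hfin.biUnion fun T _ => hk T)
  refine ⟨⋃ n, Gs n, subset_iUnion Gs 0, countable_iUnion hcount, fun T hT => ?_⟩
  obtain ⟨n, hn⟩ := hmono.directed_le.exists_mem_subset_of_finset_subset_biUnion hT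
  exact ((subset_biUnion_of_mem (u := k) hn).trans subset_union_right).trans
    (subset_iUnion Gs (n + 1))

theorem SpanZero.exists_seq_forall_not_spanApprox {X : Type*} [TopologicalSpace X]
    [CompactSpace X] [T2Space X] (hspan : SpanZero X) {G₀ : Set C(X, ℝ)} (hG₀ : G₀.Countable) :
    ∃ F : ℕ → C(X, ℝ), G₀ ⊆ range F ∧ ∀ (T : Finset ℕ) (j : ℕ), ∃ (S : Finset ℕ) (m : ℕ),
      ∀ L, ¬ SpanApprox (S.image F) (1 / (m + 1)) (Apart (T.image F) j) L := by
  choose S m hS using fun (T : Finset C(X, ℝ)) (j : ℕ) =>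
    hspan.exists_forall_not_spanApprox (isClosed_apart T j) (mk_self_notMem_apart T j)
  obtain ⟨G, hG₀G, hGc, hG⟩ := (hG₀.union (countable_singleton 0)).exists_superset_closed
    (fun T => ⋃ j, ↑(S T j)) fun T => countable_iUnion fun j => (S T j).countable_toSet
  obtain ⟨F, rfl⟩ := hGc.exists_eq_range (⟨0, hG₀G (Or.inr rfl)⟩ : G.Nonempty)
  refine ⟨F, subset_union_left.trans hG₀G, fun T j => ?_⟩
  have hSF : ↑(S (T.image F) j) ⊆ F '' univ := by
    rw [image_univ]
    exact (subset_iUnion (fun j => (S (T.image F) j : Set C(X, ℝ))) j).trans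
      (hG _ Finset.coe_image_subset_range)
  obtain ⟨S', -, hS'⟩ := Finset.subset_set_image_iff.1 hSF
  exact ⟨S', m (T.image F) j, hS' ▸ hS _ j⟩

section ChainRefinement

variable {X Y : Type*} [TopologicalSpace X] [TopologicalSpace Y]

def HasChainRefinement (U : Finset (Set X)) : Prop :=
  ∃ (n : ℕ) (V : Fin n → Set X),
    (∀ i, IsOpen (V i)) ∧ (⋃ i, V i) = univ ∧ (∀ i, ∃ u ∈ U, V i ⊆ u) ∧
      ∀ i j : Fin n, (V i ∩ V j).Nonempty ↔ |((i : ℕ) : ℤ) - ((j : ℕ) : ℤ)| ≤ 1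

theorem chainable_iff_forall_hasChainRefinement :
    Chainable X ↔ ∀ U : Finset (Set X), (∀ u ∈ U, IsOpen u) → ⋃₀ (U : Set (Set X)) = univ →
      HasChainRefinement U :=
  Iff.rfl

theorem Chainable.hasChainRefinement {π : C(X, Y)} (hπ : Function.Surjective π)
    (hY : Chainable Y) {U : Finset (Set X)} {ι : Type*} [Finite ι] (g : ι → C(Y, ℝ))
    (hgU : ∀ i, ∃ u ∈ U, ∀ x, 0 < g i (π x) → x ∈ u) (hg : ∀ y, ∃ i, 0 < g i y) :
    HasChainRefinement U := by
  have := Fintype.ofFinite ι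
  obtain ⟨n, V, hVo, hVc, hVW, hV⟩ := hY (Finset.univ.image fun i => {y | 0 < g i y})
    (by simpa using fun i => isOpen_lt continuous_const (g i).continuous)
    (eq_univ_of_forall fun y => by simpa using hg y)
  refine ⟨n, fun k => π ⁻¹' V k, fun k => (hVo k).preimage π.continuous,
    by rw [← preimage_iUnion, hVc, preimage_univ], fun k => ?_, fun k l => ?_⟩
  · obtain ⟨_, hw, hVw⟩ := hVW k
    obtain ⟨i, -, rfl⟩ := Finset.mem_image.1 hw
    obtain ⟨u, hu, hgu⟩ := hgU i
    exact ⟨u, hu, fun x hx => hgu x (hVw hx)⟩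
  · rw [← hV k l, ← preimage_inter, hπ.nonempty_preimage]

end ChainRefinement

section SeqImage

variable {X : Type*} [TopologicalSpace X] (F : ℕ → C(X, ℝ))

def toRangePi : C(X, range (ContinuousMap.pi F)) :=
  ⟨rangeFactorization _, (map_continuous _).subtype_mk _⟩

def rangePiCoord (n : ℕ) : C(range (ContinuousMap.pi F), ℝ) :=
  ⟨fun y => (y : ℕ → ℝ) n, (continuous_apply n).comp continuous_subtype_val⟩

theorem toRangePi_surjective : Function.Surjective (toRangePi F) :=
  rangeFactorization_surjective

theorem rangePiCoord_comp_toRangePi : (·.comp (toRangePi F)) ∘ rangePiCoord F = F :=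
  rfl

theorem spanZero_range_pi [CompactSpace X]
    (hF : ∀ (T : Finset ℕ) (j : ℕ), ∃ (S : Finset ℕ) (m : ℕ),
      ∀ L, ¬ SpanApprox (S.image F) (1 / (m + 1)) (Apart (T.image F) j) L) :
    SpanZero (range (ContinuousMap.pi F)) := by
  have : CompactSpace (range (ContinuousMap.pi F)) :=
    isCompact_iff_compactSpace.1 (isCompact_range (map_continuous _))
  refine spanZero_of_surjective (toRangePi_surjective F) (F := rangePiCoord F)
    (fun y y' h => Subtype.ext (funext h)) fun T j => ?_
  obtain ⟨S, m, hS⟩ := hF T j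
  refine ⟨S.image (rangePiCoord F), m, ?_⟩
  simpa only [Finset.image_image, rangePiCoord_comp_toRangePi] using hS

theorem not_chainable_range_pi {U : Finset (Set X)} (hU : ¬ HasChainRefinement U) {ι : Type*}
    [Finite ι] {ρ : ι → C(X, ℝ)} (hρF : range ρ ⊆ range F)
    (hρU : ∀ i, ∃ u ∈ U, ∀ x, 0 < ρ i x → x ∈ u) (hρ : ∀ x, ∃ i, 0 < ρ i x) :
    ¬ Chainable (range (ContinuousMap.pi F)) := by
  intro hY
  choose idx hidx using fun i => hρF (mem_range_self i)
  refine hU (hY.hasChainRefinement (toRangePi_surjective F)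
    (fun i => rangePiCoord F (idx i)) (fun i => ?_) fun y => ?_)
  · obtain ⟨u, hu, hρu⟩ := hρU i
    exact ⟨u, hu, fun x hx => hρu x (hidx i ▸ hx)⟩
  · obtain ⟨x, rfl⟩ := toRangePi_surjective F y
    obtain ⟨i, hi⟩ := hρ x
    exact ⟨i, show 0 < F (idx i) x from (hidx i).symm ▸ hi⟩

end SeqImage

theorem nonmetric_to_metric_counterexample_8 :
    (∃ (X : Type u) (_ : TopologicalSpace X),
      CompactSpace X ∧ T2Space X ∧ ConnectedSpace X ∧ SpanZero X ∧ ¬ Chainable X) →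
    ∃ (Y : Type) (_ : TopologicalSpace Y),
      TopologicalSpace.MetrizableSpace Y ∧
      CompactSpace Y ∧ T2Space Y ∧ ConnectedSpace Y ∧ SpanZero Y ∧ ¬ Chainable Y := by
  rintro ⟨X, _, _, _, _, hspan, hnc⟩
  obtain ⟨U, hUo, hUc, hU⟩ : ∃ U : Finset (Set X), (∀ u ∈ U, IsOpen u) ∧
      ⋃₀ (U : Set (Set X)) = univ ∧ ¬ HasChainRefinement U := by
    simpa only [chainable_iff_forall_hasChainRefinement, not_forall, exists_prop] using hnc
  obtain ⟨ρ, hρU⟩ := PartitionOfUnity.exists_isSubordinate isClosed_univ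
    (fun u : U => (u : Set X)) (fun u => hUo u u.2) (hUc.symm.trans sUnion_eq_iUnion).le
  obtain ⟨F, hρF, hF⟩ := hspan.exists_seq_forall_not_spanApprox (countable_range ρ)
  have hpi : Continuous (ContinuousMap.pi F) := map_continuous _
  exact ⟨range (ContinuousMap.pi F), inferInstance, inferInstance,
    isCompact_iff_compactSpace.1 (isCompact_range hpi), inferInstance,
    Subtype.connectedSpace (isConnected_range hpi), spanZero_range_pi F hF,
    not_chainable_range_pi F hU hρF
      (fun u => ⟨u, u.2, fun x hx => hρU u (subset_tsupport _ hx.ne')⟩)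
      fun x => ρ.exists_pos (mem_univ x)⟩
end

section
/- Let X be a compact Hausdorff space and let F and G be disjoint closed subsets of X × X. Then there exist finitely many closed subsets A_0, …, A_{n-1}, B_0, …, B_{n-1}, C_0, …, C_{m-1}, D_0, …, D_{m-1} of X such that F ⊆ ⋃_{i<n} (A_i × B_i), G ⊆ ⋃_{j<m} (C_j × D_j), and (⋃_{i<n} (A_i × B_i)) ∩ (⋃_{j<m} (C_j × D_j)) = ∅. -/
/-!
Being compact in the Hausdorff space `X × X`, `F` and `G` have disjoint open neighbourhoods
`U` and `V`. Since `X` is regular, every point of `F` has a neighbourhood that is a product of closed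
sets inside `U`; by compactness finitely many of them cover `F`. Doing the same for `G` inside `V`
gives the two unions, which are disjoint because `U` and `V` are.
-/

open Set Filter Topology

section ClosedRectangles

variable {X Y : Type*} [TopologicalSpace X] [TopologicalSpace Y] [RegularSpace X] [RegularSpace Y]

theorem exists_isClosed_prod_mem_nhds_subset {p : X × Y} {U : Set (X × Y)} (hU : U ∈ 𝓝 p) :
    ∃ (A : Set X) (B : Set Y), IsClosed A ∧ IsClosed B ∧ A ×ˢ B ∈ 𝓝 p ∧ A ×ˢ B ⊆ U := by
  obtain ⟨⟨A, B⟩, ⟨⟨hA, hA_closed⟩, hB, hB_closed⟩, hAB⟩ :=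
    ((closed_nhds_basis p.1).prod_nhds (closed_nhds_basis p.2)).mem_iff.1 hU
  exact ⟨A, B, hA_closed, hB_closed, prod_mem_nhds hA hB, hAB⟩

theorem IsCompact.exists_isClosed_prod_cover_subset {K U : Set (X × Y)} (hK : IsCompact K)
    (hU : IsOpen U) (hKU : K ⊆ U) :
    ∃ (n : ℕ) (A : Fin n → Set X) (B : Fin n → Set Y),
      (∀ i, IsClosed (A i)) ∧ (∀ i, IsClosed (B i)) ∧
      K ⊆ ⋃ i, A i ×ˢ B i ∧ (⋃ i, A i ×ˢ B i) ⊆ U := by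
  choose! A B hA hB hAB_nhds hAB_sub using fun p (hp : p ∈ K) =>
    exists_isClosed_prod_mem_nhds_subset (hU.mem_nhds (hKU hp))
  obtain ⟨t, htK, hKt⟩ := hK.elim_nhds_subcover (fun p => A p ×ˢ B p) hAB_nhds
  let e := t.equivFin.symm
  have hmem (i : Fin t.card) : (e i : X × Y) ∈ K := htK _ (e i).2
  refine ⟨t.card, fun i => A (e i), fun i => B (e i), fun i => hA _ (hmem i),
    fun i => hB _ (hmem i), ?_, iUnion_subset fun i => hAB_sub _ (hmem i)⟩
  rwa [Function.Surjective.iUnion_comp e.surjective (fun q : t => A q ×ˢ B q),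
    iUnion_subtype]

end ClosedRectangles

theorem separation_by_products (X : Type*) [TopologicalSpace X]
    [CompactSpace X] [T2Space X]
    (F G : Set (X × X)) (hF : IsClosed F) (hG : IsClosed G) (hFG : F ∩ G = ∅) :
    ∃ (n m : ℕ) (A B : Fin n → Set X) (C D : Fin m → Set X),
      (∀ i, IsClosed (A i)) ∧ (∀ i, IsClosed (B i)) ∧
      (∀ j, IsClosed (C j)) ∧ (∀ j, IsClosed (D j)) ∧
      F ⊆ ⋃ i, A i ×ˢ B i ∧
      G ⊆ ⋃ j, C j ×ˢ D j ∧
      (⋃ i, A i ×ˢ B i) ∩ (⋃ j, C j ×ˢ D j) = ∅ := by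
  obtain ⟨U, V, hU, hV, hFU, hGV, hUV⟩ := SeparatedNhds.of_isCompact_isCompact
    hF.isCompact hG.isCompact (disjoint_iff_inter_eq_empty.2 hFG)
  obtain ⟨n, A, B, hA, hB, hF_AB, hAB_U⟩ := hF.isCompact.exists_isClosed_prod_cover_subset hU hFU
  obtain ⟨m, C, D, hC, hD, hG_CD, hCD_V⟩ := hG.isCompact.exists_isClosed_prod_cover_subset hV hGV
  exact ⟨n, m, A, B, C, D, hA, hB, hC, hD, hF_AB, hG_CD,
    disjoint_iff_inter_eq_empty.1 (hUV.mono hAB_U hCD_V)⟩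
end

section
/- Let κ be a nonempty discrete topological space and X a continuum. Let g : β(κ × X) → Ultrafilter(κ) be the continuous extension (via the universal property of the Stone–Čech compactification) of the map κ × X → Ultrafilter(κ) sending (α, x) to the principal ultrafilter at α, where Ultrafilter(κ) carries its usual compact Hausdorff topology. Then for every ultrafilter u on κ the fiber g⁻¹({u}) is a nonempty, compact, connected subset of β(κ × X). -/
/-!
The fibres of `g` are the quasi-components of `β(κ × X)`: since `X` is connected, a clopen set of
`β(κ × X)` meets `κ × X` in some `A × X`, and by density it is then the clopen set
`g⁻¹ {v | A ∈ v}`. In a compact Hausdorff space quasi-components are connected components, and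
the fibres are nonempty because the range of `g` is closed and contains the dense set of
principal ultrafilters.
-/

open Set

theorem preimage_singleton_eq_connectedComponent {Y Z : Type*} [TopologicalSpace Y]
    [CompactSpace Y] [T2Space Y] [TopologicalSpace Z] [TotallyDisconnectedSpace Z]
    {f : Y → Z} (hf : Continuous f) (hsat : ∀ C : Set Y, IsClopen C → ∃ S : Set Z, C = f ⁻¹' S)
    (y : Y) : f ⁻¹' {f y} = connectedComponent y := by
  refine Subset.antisymm ?_ fun z hz => ?_
  · rw [connectedComponent_eq_iInter_isClopen]
    refine subset_iInter fun ⟨C, hC, hyC⟩ => ?_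
    obtain ⟨S, rfl⟩ := hsat C hC
    exact preimage_mono (singleton_subset_iff.2 hyC)
  · exact (isPreconnected_connectedComponent.image f hf.continuousOn).subsingleton
      (mem_image_of_mem f hz) (mem_image_of_mem f mem_connectedComponent)

section ProdStoneCech

variable {κ X : Type*} [TopologicalSpace κ] [TopologicalSpace X]
  {g : StoneCech (κ × X) → Ultrafilter κ}

theorem exists_eq_preimage_setOf_mem_of_isClopen [PreconnectedSpace X] (hg : Continuous g)
    (hgu : ∀ p : κ × X, g (stoneCechUnit p) = pure p.1) {C : Set (StoneCech (κ × X))}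
    (hC : IsClopen C) : ∃ A : Set κ, C = g ⁻¹' {v | A ∈ v} := by
  set A : Set κ := {a | ∀ x : X, stoneCechUnit (a, x) ∈ C}
  have hslice (p : κ × X) : stoneCechUnit p ∈ C ↔ p.1 ∈ A := by
    refine ⟨fun hp x => ?_, fun hA => hA p.2⟩
    have hclopen : IsClopen ((fun x : X => stoneCechUnit (p.1, x)) ⁻¹' C) :=
      hC.preimage (continuous_stoneCechUnit.comp (Continuous.prodMk_right p.1))
    exact (hclopen.eq_univ ⟨p.2, hp⟩ ▸ mem_univ x :)
  have hbasic : IsClopen {v : Ultrafilter κ | A ∈ v} :=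
    ⟨ultrafilter_isClosed_basic A, ultrafilter_isOpen_basic A⟩
  have hind : C.boolIndicator = {v : Ultrafilter κ | A ∈ v}.boolIndicator ∘ g := by
    refine stoneCech_hom_ext ((continuous_boolIndicator_iff_isClopen C).2 hC)
      (((continuous_boolIndicator_iff_isClopen _).2 hbasic).comp hg) (funext fun p => ?_)
    simp [Set.boolIndicator, hslice, hgu, Ultrafilter.mem_pure]
  refine ⟨A, ?_⟩
  rw [← preimage_boolIndicator_true C, hind, preimage_comp, preimage_boolIndicator_true]

theorem surjective_of_apply_stoneCechUnit [Nonempty X] (hg : Continuous g)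
    (hgu : ∀ p : κ × X, g (stoneCechUnit p) = pure p.1) : Function.Surjective g := by
  have hdense : DenseRange g := denseRange_pure.mono <|
    range_subset_iff.2 fun a => ⟨stoneCechUnit (a, Classical.arbitrary X), hgu _⟩
  rw [← range_eq_univ, ← hdense.closure_range, (isCompact_range hg).isClosed.closure_eq]

end ProdStoneCech

theorem ultracopower_is_continuum_general
    (κ : Type*) [TopologicalSpace κ]
    (X : Type*) [TopologicalSpace X] [ConnectedSpace X]
    (g : StoneCech (κ × X) → Ultrafilter κ) (hg : Continuous g)
    (hgu : ∀ p : κ × X, g (stoneCechUnit p) = (pure p.1 : Ultrafilter κ))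
    (u : Ultrafilter κ) :
    (g ⁻¹' {u}).Nonempty ∧ IsCompact (g ⁻¹' {u}) ∧ IsConnected (g ⁻¹' {u}) := by
  obtain ⟨y, rfl⟩ := surjective_of_apply_stoneCechUnit hg hgu u
  refine ⟨⟨y, rfl⟩, (isClosed_singleton.preimage hg).isCompact, ?_⟩
  rw [preimage_singleton_eq_connectedComponent hg
    (fun C hC => (exists_eq_preimage_setOf_mem_of_isClopen hg hgu hC).elim fun _ h => ⟨_, h⟩) y]
  exact isConnected_connectedComponent

theorem ultracopower_is_continuum
    (κ : Type*) [TopologicalSpace κ] [DiscreteTopology κ] [Nonempty κ]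
    (X : Type*) [TopologicalSpace X] [CompactSpace X] [T2Space X] [ConnectedSpace X]
    (g : StoneCech (κ × X) → Ultrafilter κ) (hg : Continuous g)
    (hgu : ∀ p : κ × X, g (stoneCechUnit p) = (pure p.1 : Ultrafilter κ))
    (u : Ultrafilter κ) :
    (g ⁻¹' {u}).Nonempty ∧ IsCompact (g ⁻¹' {u}) ∧ IsConnected (g ⁻¹' {u}) :=
  ultracopower_is_continuum_general κ X g hg hgu u
end

section
/- Let κ be a discrete topological space, X a compact Hausdorff space, and g : β(κ × X) → Ultrafilter(κ) the continuous extension of the map sending (α, x) to the principal ultrafilter at α. Let u be an ultrafilter on κ and let F and G be closed subsets of κ × X. Then cl_{β(κ×X)}(ι[F]) ∩ g⁻¹({u}) = cl_{β(κ×X)}(ι[G]) ∩ g⁻¹({u}) if and only if the set {α ∈ κ : {x ∈ X : (α,x) ∈ F} = {x ∈ X : (α,x) ∈ G}} belongs to u. -/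
/-!
If the slices of `F` and `G` agree on a set `A ∈ u`, then near the fibre `g⁻¹ {u}` only the part of
`F` and `G` over `A` matters, and there the two sets coincide. Conversely, if the slices differ on a
`u`-large set, say `(α, x α) ∈ F \ G` for `u`-many `α`, then the `u`-limit of the points
`(α, x α)` lies in the fibre and in the closure of `F`; it is kept away from the closure of `G`
because `κ × X` is paracompact, hence normal, so a Urysohn function separating `G` from the closed
set `{(α, x α)}` extends to `β(κ × X)`.
-/

open Set Filter Topology

instance DiscreteTopology.paracompactSpace (κ : Type*) [TopologicalSpace κ] [DiscreteTopology κ] :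
    ParacompactSpace κ := by
  let := TopologicalSpace.pseudoMetrizableSpacePseudoMetric κ
  infer_instance

theorem StoneCech.disjoint_closure_image_of_isClosed {α : Type*} [TopologicalSpace α]
    [NormalSpace α] {S T : Set α} (hS : IsClosed S) (hT : IsClosed T) (hST : Disjoint S T) :
    Disjoint (closure (stoneCechUnit '' S)) (closure (stoneCechUnit '' T)) := by
  obtain ⟨f, hfS, hfT, hf01⟩ := exists_continuous_zero_one_of_isClosed hS hT hST
  let φ : α → Icc (0 : ℝ) 1 := fun a => ⟨f a, hf01 a⟩
  have hφ : Continuous φ := f.continuous.subtype_mk _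
  have hφe := continuous_stoneCechExtend hφ
  have hmaps {R : Set α} {c : Icc (0 : ℝ) 1} (hR : EqOn f (fun _ => c.1) R) :
      MapsTo (stoneCechExtend hφ) (closure (stoneCechUnit '' R)) {c} := by
    refine MapsTo.closure_left ?_ hφe isClosed_singleton
    rintro _ ⟨a, ha, rfl⟩
    exact Subtype.ext ((stoneCechExtend_stoneCechUnit hφ a).symm ▸ hR ha)
  refine Set.disjoint_left.2 fun p hpS hpT => ?_
  have h01 := (hmaps (c := ⟨0, left_mem_Icc.2 zero_le_one⟩) hfS hpS).symm.trans
    (hmaps (c := ⟨1, right_mem_Icc.2 zero_le_one⟩) hfT hpT)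
  exact zero_ne_one (congrArg Subtype.val h01)

section Fibres

variable {κ X : Type*} [TopologicalSpace κ] [TopologicalSpace X]
  {g : StoneCech (κ × X) → Ultrafilter κ}

theorem mem_of_mem_closure_image_stoneCechUnit (hg : Continuous g)
    (hgu : ∀ p : κ × X, g (stoneCechUnit p) = (pure p.1 : Ultrafilter κ))
    {A : Set κ} {S : Set (κ × X)} (hSA : S ⊆ Prod.fst ⁻¹' A) {p : StoneCech (κ × X)}
    (hp : p ∈ closure (stoneCechUnit '' S)) : A ∈ g p := by
  refine MapsTo.closure_left ?_ hg (ultrafilter_isClosed_basic A) hp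
  rintro _ ⟨q, hq, rfl⟩
  rw [mem_ofPred_eq, hgu]
  exact hSA hq

theorem closure_image_stoneCechUnit_inter_preimage_eq (hg : Continuous g)
    (hgu : ∀ p : κ × X, g (stoneCechUnit p) = (pure p.1 : Ultrafilter κ))
    {u : Ultrafilter κ} {A : Set κ} (hA : A ∈ u) (S : Set (κ × X)) :
    closure (stoneCechUnit '' S) ∩ g ⁻¹' {u} =
      closure (stoneCechUnit '' (S ∩ Prod.fst ⁻¹' A)) ∩ g ⁻¹' {u} := by
  refine Subset.antisymm ?_ (inter_subset_inter_left _ (closure_mono (image_mono inter_subset_left)))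
  rintro p ⟨hpS, hpu : g p = u⟩
  refine ⟨?_, hpu⟩
  rw [← inter_union_sdiff S (Prod.fst ⁻¹' A), image_union, closure_union] at hpS
  refine hpS.resolve_right fun hp => ?_
  have hAc : Aᶜ ∈ g p :=
    mem_of_mem_closure_image_stoneCechUnit hg hgu (fun _ hq => hq.2) hp
  exact (Ultrafilter.compl_mem_iff_notMem.1 (hpu ▸ hAc)) hA

theorem exists_tendsto_stoneCechUnit_of_fst_eq (hg : Continuous g)
    (hgu : ∀ p : κ × X, g (stoneCechUnit p) = (pure p.1 : Ultrafilter κ))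
    (u : Ultrafilter κ) (x : κ → X) :
    ∃ p, g p = u ∧ Tendsto (fun α => stoneCechUnit (α, x α)) u (𝓝 p) := by
  set p := (u.map fun α => stoneCechUnit (α, x α)).lim
  have hp : Tendsto (fun α => stoneCechUnit (α, x α)) u (𝓝 p) := Ultrafilter.le_nhds_lim _
  refine ⟨p, tendsto_nhds_unique ?_ (Ultrafilter.tendsto_pure_self u), hp⟩
  simpa only [Function.comp_def, hgu] using (hg.tendsto p).comp hp

theorem exists_mem_closure_inter_preimage_notMem_closure [DiscreteTopology κ] [CompactSpace X]
    [T2Space X] (hg : Continuous g)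
    (hgu : ∀ p : κ × X, g (stoneCechUnit p) = (pure p.1 : Ultrafilter κ))
    {u : Ultrafilter κ} {F G : Set (κ × X)} (hG : IsClosed G)
    (hB : {α : κ | ∃ x : X, (α, x) ∈ F ∧ (α, x) ∉ G} ∈ u) :
    ∃ p ∈ closure (stoneCechUnit '' F) ∩ g ⁻¹' {u}, p ∉ closure (stoneCechUnit '' G) := by
  set B := {α : κ | ∃ x : X, (α, x) ∈ F ∧ (α, x) ∉ G}
  obtain ⟨-, x₀, -⟩ := u.nonempty_of_mem hB
  have : Nonempty X := ⟨x₀⟩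
  choose! x hxF hxG using fun α (hα : α ∈ B) => hα
  set T := {q : κ × X | q.1 ∈ B ∧ q.2 = x q.1}
  have hT : IsClosed T := ((isClosed_discrete B).preimage continuous_fst).inter
    (isClosed_eq continuous_snd (continuous_of_discreteTopology.comp continuous_fst))
  have hTF : T ⊆ F := by
    rintro ⟨α, y⟩ ⟨hα, rfl : y = x α⟩
    exact hxF α hα
  have hTG : Disjoint T G := by
    refine Set.disjoint_left.2 ?_
    rintro ⟨α, y⟩ ⟨hα, rfl : y = x α⟩
    exact hxG α hα
  obtain ⟨p, hpu, hp⟩ := exists_tendsto_stoneCechUnit_of_fst_eq hg hgu u x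
  have hpT : p ∈ closure (stoneCechUnit '' T) :=
    mem_closure_of_tendsto hp (mem_of_superset hB fun α hα => mem_image_of_mem _ ⟨hα, rfl⟩)
  exact ⟨p, ⟨closure_mono (image_mono hTF) hpT, hpu⟩,
    Set.disjoint_left.1 (StoneCech.disjoint_closure_image_of_isClosed hT hG hTG) hpT⟩

end Fibres

theorem closure_inter_ultracopower_eq_iff
    (κ : Type*) [TopologicalSpace κ] [DiscreteTopology κ]
    (X : Type*) [TopologicalSpace X] [CompactSpace X] [T2Space X]
    (g : StoneCech (κ × X) → Ultrafilter κ) (hg : Continuous g)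
    (hgu : ∀ p : κ × X, g (stoneCechUnit p) = (pure p.1 : Ultrafilter κ))
    (u : Ultrafilter κ)
    (F G : Set (κ × X)) (hF : IsClosed F) (hG : IsClosed G) :
    closure (stoneCechUnit '' F) ∩ g ⁻¹' {u} = closure (stoneCechUnit '' G) ∩ g ⁻¹' {u} ↔
      {α : κ | {x : X | (α, x) ∈ F} = {x : X | (α, x) ∈ G}} ∈ u := by
  set A := {α : κ | {x : X | (α, x) ∈ F} = {x : X | (α, x) ∈ G}}
  constructor
  · intro h
    by_contra hA
    have hAc : Aᶜ ⊆ {α | ∃ x, (α, x) ∈ F ∧ (α, x) ∉ G} ∪ {α | ∃ x, (α, x) ∈ G ∧ (α, x) ∉ F} := by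
      intro α hα
      by_contra! hFG
      exact hα (Set.ext fun x => by grind)
    rcases Ultrafilter.union_mem_iff.1 (mem_of_superset (Ultrafilter.compl_mem_iff_notMem.2 hA) hAc)
      with hB | hB
    · obtain ⟨p, hpF, hpG⟩ := exists_mem_closure_inter_preimage_notMem_closure hg hgu hG hB
      exact hpG (h ▸ hpF).1
    · obtain ⟨p, hpG, hpF⟩ := exists_mem_closure_inter_preimage_notMem_closure hg hgu hF hB
      exact hpF (h ▸ hpG).1
  · intro hA
    have hFG : F ∩ Prod.fst ⁻¹' A = G ∩ Prod.fst ⁻¹' A := by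
      ext ⟨α, x⟩
      simp only [mem_inter_iff, mem_preimage]
      exact and_congr_left fun hα => Set.ext_iff.1 hα x
    rw [closure_image_stoneCechUnit_inter_preimage_eq hg hgu hA F,
      closure_image_stoneCechUnit_inter_preimage_eq hg hgu hA G, hFG]
end
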